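/- arXiv:2512.06218 — 12 statements merged into one kernel-verified Lean document; each statement's English description precedes it below -/
import Mathlib

section
/- Let f : ℝ^d → ℝ be Lipschitz continuous with respect to the sup norm and SISTr, and let ℓ ∈ ℝ. Then for every x ∈ ℝ^d there exists a unique real number c_x such that f(x + c_x) = ℓ, and the function x ↦ c_x is continuous on ℝ^d. -/
/-! The level function `x ↦ c_x` is squeezed by monotonicity: if `a < c_x < b` then
`f(x + a) < ℓ < f(x + b)`, and by continuity of `f` these strict inequalities persist for `y`
near `x`, which forces `a < c_y < b`. -/

/-- `g` is strictly increasing under scalar translation (SISTr) at `x`: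
the map `c ↦ g(x + c)` (adding `c` to every component) is strictly increasing
and maps `ℝ` onto `ℝ`. -/
def SISTrAt {d : ℕ} (g : (Fin d → ℝ) → ℝ) (x : Fin d → ℝ) : Prop :=
  StrictMono (fun c : ℝ => g (fun i => x i + c)) ∧
    Function.Surjective (fun c : ℝ => g (fun i => x i + c))

/-- `g` is SISTr if it is SISTr at every point. -/
def SISTr {d : ℕ} (g : (Fin d → ℝ) → ℝ) : Prop :=
  ∀ x : Fin d → ℝ, SISTrAt g x

theorem continuous_of_abs_sub_le_mul_norm {E : Type*} [SeminormedAddCommGroup E] {f : E → ℝ}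
    (hf : ∃ L : ℝ, ∀ x y : E, |f x - f y| ≤ L * ‖x - y‖) : Continuous f := by
  obtain ⟨L, hL⟩ := hf
  refine (LipschitzWith.of_dist_le' (K := L) fun x y => ?_).continuous
  simpa only [Real.dist_eq, dist_eq_norm x y] using hL x y

theorem continuous_of_strictMono_of_apply_eq {X α β : Type*} [TopologicalSpace X]
    [LinearOrder α] [TopologicalSpace α] [OrderTopology α]
    [LinearOrder β] [TopologicalSpace β] [OrderClosedTopology β]
    {F : X → α → β} {C : X → α} {ℓ : β}
    (hF : ∀ c, Continuous fun y => F y c) (hmono : ∀ y, StrictMono (F y))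
    (hC : ∀ y, F y (C y) = ℓ) : Continuous C := by
  refine continuous_iff_continuousAt.2 fun x => tendsto_order.2 ⟨fun a ha => ?_, fun b hb => ?_⟩
  · have hlt : F x a < ℓ := hC x ▸ hmono x ha
    filter_upwards [((hF a).tendsto x).eventually_lt_const hlt] with y hy
    exact (hmono y).lt_iff_lt.1 (hC y ▸ hy)
  · have hgt : ℓ < F x b := hC x ▸ hmono x hb
    filter_upwards [((hF b).tendsto x).eventually_const_lt hgt] with y hy
    exact (hmono y).lt_iff_lt.1 (hC y ▸ hy)

theorem statement0_general {d : ℕ} (f : (Fin d → ℝ) → ℝ)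
    (hLip : ∃ L : ℝ, ∀ x y : Fin d → ℝ, |f x - f y| ≤ L * ‖x - y‖)
    (hS : SISTr f) (ℓ : ℝ) :
    ∃ C : (Fin d → ℝ) → ℝ, Continuous C ∧
      (∀ x : Fin d → ℝ, f (fun i => x i + C x) = ℓ) ∧
      (∀ (x : Fin d → ℝ) (c : ℝ), f (fun i => x i + c) = ℓ → c = C x) := by
  have hf : Continuous f := continuous_of_abs_sub_le_mul_norm hLip
  choose C hC using fun x => (hS x).2 ℓ
  refine ⟨C, ?_, hC, fun x c h => (hS x).1.injective (h.trans (hC x).symm)⟩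
  exact continuous_of_strictMono_of_apply_eq (fun c => by fun_prop) (fun y => (hS y).1) hC

/-- If `f : ℝ^d → ℝ` is Lipschitz (w.r.t. the sup norm) and SISTr, then for
every `x` there is a unique `c_x` with `f(x + c_x) = ℓ`, and `x ↦ c_x` is
continuous. -/
theorem statement0 {d : ℕ} (hd : 1 ≤ d) (f : (Fin d → ℝ) → ℝ)
    (hLip : ∃ L : ℝ, ∀ x y : Fin d → ℝ, |f x - f y| ≤ L * ‖x - y‖)
    (hS : SISTr f) (ℓ : ℝ) :
    ∃ C : (Fin d → ℝ) → ℝ, Continuous C ∧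
      (∀ x : Fin d → ℝ, f (fun i => x i + C x) = ℓ) ∧
      (∀ (x : Fin d → ℝ) (c : ℝ), f (fun i => x i + c) = ℓ → c = C x) :=
  statement0_general f hLip hS ℓ
end

section
/- Let f : ℝ^d → ℝ be Lipschitz continuous with respect to the sup norm and SISTr. For each δ > 0 and x ∈ ℝ^d, the number ε_{x,δ} is well defined (a smallest such ε exists), and for every bounded set D ⊆ ℝ^d one has sup_{x ∈ D} ε_{x,δ} < ∞; moreover sup_{x ∈ D} ε_{x,δ} is nondecreasing in δ and tends to 0 as δ ↓ 0. -/
open Filter Topology Set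

variable {d : ℕ} {f : (Fin d → ℝ) → ℝ} {K : NNReal} {x : Fin d → ℝ} {δ η : ℝ}

def translationGap (f : (Fin d → ℝ) → ℝ) (x : Fin d → ℝ) (ε : ℝ) : ℝ :=
  min (f (fun i => x i + ε) - f x) (f x - f (fun i => x i - ε))

/-- The `ε_{x,δ}` of the paper (a junk value when `translationGap f x ε = δ` has no positive
solution). -/
noncomputable def gapRadius (f : (Fin d → ℝ) → ℝ) (x : Fin d → ℝ) (δ : ℝ) : ℝ :=
  Classical.epsilon fun ε => 0 < ε ∧ translationGap f x ε = δ

@[simp]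
lemma translationGap_zero (f : (Fin d → ℝ) → ℝ) (x : Fin d → ℝ) : translationGap f x 0 = 0 := by
  simp [translationGap]

lemma continuous_translationGap (hf : Continuous f) (x : Fin d → ℝ) :
    Continuous (translationGap f x) := by
  unfold translationGap
  fun_prop

lemma continuous_translationGap_left (hf : Continuous f) (ε : ℝ) :
    Continuous fun x => translationGap f x ε := by
  unfold translationGap
  fun_prop

lemma LipschitzWith.translationGap (hf : LipschitzWith K f) (ε : ℝ) :
    LipschitzWith (2 * K) fun x => translationGap f x ε := by
  refine LipschitzWith.of_dist_le_mul fun x y => ?_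
  have hdist : ∀ u v : Fin d → ℝ, dist u v = dist x y → |f u - f v| ≤ K * dist x y :=
    fun u v h => by rw [← Real.dist_eq, ← h]; exact hf.dist_le_mul u v
  obtain ⟨hx₁, hx₂⟩ := abs_le.mp (hdist x y rfl)
  obtain ⟨hp₁, hp₂⟩ := abs_le.mp (hdist (fun i => x i + ε) (fun i => y i + ε)
    (dist_add_right x y fun _ => ε))
  obtain ⟨hm₁, hm₂⟩ := abs_le.mp (hdist (fun i => x i - ε) (fun i => y i - ε)
    (dist_sub_right x y fun _ => ε))
  rw [Real.dist_eq, NNReal.coe_mul, NNReal.coe_two]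
  refine (abs_min_sub_min_le_max _ _ _ _).trans (max_le ?_ ?_) <;>
    exact abs_le.mpr ⟨by linarith, by linarith⟩

namespace SISTr

lemma strictMono_translationGap (hS : SISTr f) (x : Fin d → ℝ) :
    StrictMono (translationGap f x) := by
  intro a b hab
  have hplus : f (fun i => x i + a) < f (fun i => x i + b) := (hS x).1 hab
  have hminus : f (fun i => x i - b) < f (fun i => x i - a) := by
    simpa only [← sub_eq_add_neg] using (hS x).1 (neg_lt_neg hab)
  exact min_lt_min (by linarith) (by linarith)

lemma translationGap_pos (hS : SISTr f) (x : Fin d → ℝ) {ε : ℝ} (hε : 0 < ε) :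
    0 < translationGap f x ε := by
  simpa using hS.strictMono_translationGap x hε

lemma exists_le_translationGap (hS : SISTr f) (x : Fin d → ℝ) (δ : ℝ) :
    ∃ E, δ ≤ translationGap f x E := by
  obtain ⟨E₁, hE₁⟩ := (hS x).2 (f x + δ)
  obtain ⟨E₂, hE₂⟩ := (hS x).2 (f x - δ)
  have hmono := (hS x).1.monotone
  refine ⟨max E₁ (-E₂), le_min ?_ ?_⟩
  · have : f x + δ ≤ f (fun i => x i + max E₁ (-E₂)) := hE₁ ▸ hmono (le_max_left _ _)
    linarith
  · have : f (fun i => x i + -max E₁ (-E₂)) ≤ f x - δ :=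
      hE₂ ▸ hmono (neg_le.mpr (le_max_right _ _))
    simp only [← sub_eq_add_neg] at this
    linarith

lemma exists_translationGap_eq (hf : Continuous f) (hS : SISTr f) (x : Fin d → ℝ)
    (hδ : 0 < δ) : ∃ ε, 0 < ε ∧ translationGap f x ε = δ := by
  obtain ⟨E, hE⟩ := hS.exists_le_translationGap x δ
  have hE0 : 0 ≤ E := (hS.strictMono_translationGap x).le_iff_le.mp (by simpa using hδ.le.trans hE)
  obtain ⟨ε, -, hε⟩ := intermediate_value_Icc hE0 (continuous_translationGap hf x).continuousOn
    (by simpa using And.intro hδ.le hE)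
  exact ⟨ε, (hS.strictMono_translationGap x).lt_iff_lt.mp (by simpa [hε] using hδ), hε⟩

lemma gapRadius_spec (hf : Continuous f) (hS : SISTr f) (x : Fin d → ℝ) (hδ : 0 < δ) :
    0 < gapRadius f x δ ∧ translationGap f x (gapRadius f x δ) = δ :=
  Classical.epsilon_spec (hS.exists_translationGap_eq hf x hδ)

lemma isLeast_gapRadius (hf : Continuous f) (hS : SISTr f) (x : Fin d → ℝ) (hδ : 0 < δ) :
    IsLeast {ε | 0 < ε ∧ translationGap f x ε = δ} (gapRadius f x δ) := by
  refine ⟨hS.gapRadius_spec hf x hδ, fun ε hε => le_of_eq ?_⟩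
  exact (hS.strictMono_translationGap x).injective ((hS.gapRadius_spec hf x hδ).2.trans hε.2.symm)

lemma gapRadius_le (hf : Continuous f) (hS : SISTr f) (hδ : 0 < δ)
    (h : δ ≤ translationGap f x η) : gapRadius f x δ ≤ η :=
  (hS.strictMono_translationGap x).le_iff_le.mp ((hS.gapRadius_spec hf x hδ).2.trans_le h)

lemma gapRadius_mono (hf : Continuous f) (hS : SISTr f) (x : Fin d → ℝ) {δ₁ δ₂ : ℝ}
    (hδ₁ : 0 < δ₁) (h : δ₁ ≤ δ₂) : gapRadius f x δ₁ ≤ gapRadius f x δ₂ :=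
  hS.gapRadius_le hf hδ₁ (h.trans (hS.gapRadius_spec hf x (hδ₁.trans_le h)).2.ge)

lemma sSup_gapRadius_image_nonneg (hf : Continuous f) (hS : SISTr f) (D : Set (Fin d → ℝ))
    (hδ : 0 < δ) : 0 ≤ sSup ((fun x => gapRadius f x δ) '' D) :=
  Real.sSup_nonneg <| forall_mem_image.2 fun x _ => (hS.gapRadius_spec hf x hδ).1.le

variable {D : Set (Fin d → ℝ)}

lemma bddAbove_gapRadius_image (hf : LipschitzWith K f) (hS : SISTr f)
    (hD : Bornology.IsBounded D) (hδ : 0 < δ) : BddAbove ((fun x => gapRadius f x δ) '' D) := by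
  obtain ⟨R, hR⟩ := hD.subset_closedBall 0
  obtain ⟨E, hE⟩ := hS.exists_le_translationGap 0 (δ + 2 * K * R)
  refine ⟨E, forall_mem_image.2 fun x hx => hS.gapRadius_le hf.continuous hδ ?_⟩
  have hxR : 2 * K * dist x 0 ≤ 2 * K * R := by gcongr; exact hR hx
  have hcomp := (abs_le.mp ((hf.translationGap E).dist_le_mul x 0)).1
  push_cast at hcomp
  linarith

lemma sSup_gapRadius_image_mono (hf : LipschitzWith K f) (hS : SISTr f)
    (hD : Bornology.IsBounded D) {δ₁ δ₂ : ℝ} (hδ₁ : 0 < δ₁) (h : δ₁ ≤ δ₂) :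
    sSup ((fun x => gapRadius f x δ₁) '' D) ≤ sSup ((fun x => gapRadius f x δ₂) '' D) := by
  have hδ₂ : 0 < δ₂ := hδ₁.trans_le h
  refine Real.sSup_le (forall_mem_image.2 fun x hx => ?_)
    (hS.sSup_gapRadius_image_nonneg hf.continuous D hδ₂)
  exact (hS.gapRadius_mono hf.continuous x hδ₁ h).trans
    (le_csSup (hS.bddAbove_gapRadius_image hf hD hδ₂) (mem_image_of_mem _ hx))

lemma tendsto_sSup_gapRadius_image (hf : Continuous f) (hS : SISTr f)
    (hD : Bornology.IsBounded D) :
    Tendsto (fun δ => sSup ((fun x => gapRadius f x δ) '' D)) (𝓝[>] 0) (𝓝 0) := by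
  refine tendsto_order.2 ⟨fun a ha => ?_, fun η hη => ?_⟩
  · filter_upwards [self_mem_nhdsWithin] with δ hδ
    exact ha.trans_le (hS.sSup_gapRadius_image_nonneg hf D hδ)
  · obtain ⟨m, hm, hmD⟩ := hD.isCompact_closure.exists_forall_le'
      (continuous_translationGap_left hf (η / 2)).continuousOn
      fun x _ => hS.translationGap_pos x (half_pos hη)
    filter_upwards [Ioo_mem_nhdsGT hm] with δ ⟨hδ, hδm⟩
    refine lt_of_le_of_lt ?_ (half_lt_self hη)
    refine Real.sSup_le (forall_mem_image.2 fun x hx => ?_) (half_pos hη).le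
    exact hS.gapRadius_le hf hδ (hδm.le.trans (hmD x (subset_closure hx)))

end SISTr

theorem statement1_general {d : ℕ} (f : (Fin d → ℝ) → ℝ)
    (hLip : ∃ L : ℝ, ∀ x y : Fin d → ℝ, |f x - f y| ≤ L * ‖x - y‖)
    (hS : SISTr f) :
    ∃ eps : (Fin d → ℝ) → ℝ → ℝ,
      (∀ (x : Fin d → ℝ), ∀ δ > (0 : ℝ),
        IsLeast {ε : ℝ | 0 < ε ∧
          min (f (fun i => x i + ε) - f x) (f x - f (fun i => x i - ε)) = δ}
          (eps x δ)) ∧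
      (∀ D : Set (Fin d → ℝ), Bornology.IsBounded D →
        (∀ δ > (0 : ℝ), BddAbove ((fun x => eps x δ) '' D)) ∧
        (∀ δ₁ δ₂ : ℝ, 0 < δ₁ → δ₁ ≤ δ₂ →
          sSup ((fun x => eps x δ₁) '' D) ≤ sSup ((fun x => eps x δ₂) '' D)) ∧
        Filter.Tendsto (fun δ : ℝ => sSup ((fun x => eps x δ) '' D))
          (nhdsWithin 0 (Set.Ioi 0)) (nhds 0)) := by
  obtain ⟨L, hL⟩ := hLip
  have hf : LipschitzWith (Real.toNNReal L) f :=
    LipschitzWith.of_dist_le' fun x y => by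
      rw [Real.dist_eq, dist_eq_norm]; exact hL x y
  refine ⟨gapRadius f, fun x δ hδ => hS.isLeast_gapRadius hf.continuous x hδ, fun D hD => ?_⟩
  exact ⟨fun δ hδ => hS.bddAbove_gapRadius_image hf hD hδ,
    fun δ₁ δ₂ hδ₁ h => hS.sSup_gapRadius_image_mono hf hD hδ₁ h,
    hS.tendsto_sSup_gapRadius_image hf.continuous hD⟩

/-- For a Lipschitz SISTr `f`, for each `δ > 0` and `x` the quantity
`ε_{x,δ}`, the smallest `ε > 0` with
`min (f(x+ε) − f(x)) (f(x) − f(x−ε)) = δ`, is well defined; and for every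
bounded set `D`, `sup_{x ∈ D} ε_{x,δ}` is finite, nondecreasing in `δ`, and
tends to `0` as `δ ↓ 0`. -/
theorem statement1 {d : ℕ} (hd : 1 ≤ d) (f : (Fin d → ℝ) → ℝ)
    (hLip : ∃ L : ℝ, ∀ x y : Fin d → ℝ, |f x - f y| ≤ L * ‖x - y‖)
    (hS : SISTr f) :
    ∃ eps : (Fin d → ℝ) → ℝ → ℝ,
      (∀ (x : Fin d → ℝ), ∀ δ > (0 : ℝ),
        IsLeast {ε : ℝ | 0 < ε ∧
          min (f (fun i => x i + ε) - f x) (f x - f (fun i => x i - ε)) = δ}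
          (eps x δ)) ∧
      (∀ D : Set (Fin d → ℝ), Bornology.IsBounded D →
        (∀ δ > (0 : ℝ), BddAbove ((fun x => eps x δ) '' D)) ∧
        (∀ δ₁ δ₂ : ℝ, 0 < δ₁ → δ₁ ≤ δ₂ →
          sSup ((fun x => eps x δ₁) '' D) ≤ sSup ((fun x => eps x δ₂) '' D)) ∧
        Filter.Tendsto (fun δ : ℝ => sSup ((fun x => eps x δ) '' D))
          (nhdsWithin 0 (Set.Ioi 0)) (nhds 0)) :=
  statement1_general f hLip hS
end

section
/- Let S and A be finite nonempty sets, p : S × A × S → ℝ with p(s,a,·) a probability distribution on S for each (s,a), r : S × A → ℝ, and t : S × A → ℝ with t(s,a) > 0 for all (s,a). Let 0 < ᾱ ≤ min_{(s,a)} t(s,a), and define T : ℝ^{S×A} → ℝ^{S×A} by T(q)(s,a) = ᾱ·r(s,a)/t(s,a) + (ᾱ/t(s,a))·Σ_{s'} p(s,a,s')·max_{a'} q(s',a') + (1 − ᾱ/t(s,a))·q(s,a). Then T is nonexpansive with respect to the sup norm, i.e., ‖T(q) − T(q')‖∞ ≤ ‖q − q'‖∞ for all q, q' ∈ ℝ^{S×A},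 and T(q + c) = T(q) + c for every q ∈ ℝ^{S×A} and c ∈ ℝ. -/
/-!
Each component `T q (s, a) - T q' (s, a)` is a convex combination, with weights `α / t s a` and
`1 - α / t s a`, of `q (s, a) - q' (s, a)` and of a `p`-average of differences of row maxima;
taking the maximum over `a'` is itself nonexpansive, so every term is bounded by `‖q - q'‖`.
Adding `c` to `q` shifts every row maximum, hence every term of the convex combination, by `c`.
-/

open Finset

section

variable {ι : Type*}

lemma ciSup_le_ciSup_add [Finite ι] [Nonempty ι] {f g : ι → ℝ} {δ : ℝ}
    (h : ∀ i, f i ≤ g i + δ) : ⨆ i, f i ≤ (⨆ i, g i) + δ :=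
  (ciSup_mono (Set.finite_range _).bddAbove h).trans_eq
    (ciSup_add (Set.finite_range g).bddAbove δ).symm

lemma abs_ciSup_sub_ciSup_le [Finite ι] [Nonempty ι] {f g : ι → ℝ} {δ : ℝ}
    (h : ∀ i, |f i - g i| ≤ δ) : |(⨆ i, f i) - ⨆ i, g i| ≤ δ := by
  rw [abs_sub_le_iff, sub_le_iff_le_add', sub_le_iff_le_add']
  constructor <;> apply ciSup_le_ciSup_add <;> intro i
  · linarith [(abs_sub_le_iff.1 (h i)).1]
  · linarith [(abs_sub_le_iff.1 (h i)).2]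

lemma abs_sum_mul_le_of_abs_le [Fintype ι] {w x : ι → ℝ} {δ : ℝ} (hw0 : ∀ i, 0 ≤ w i)
    (hw1 : ∑ i, w i = 1) (hx : ∀ i, |x i| ≤ δ) : |∑ i, w i * x i| ≤ δ :=
  calc |∑ i, w i * x i| ≤ ∑ i, |w i * x i| := abs_sum_le_sum_abs _ _
    _ ≤ ∑ i, w i * δ := by
        gcongr with i
        rw [abs_mul, abs_of_nonneg (hw0 i)]
        exact mul_le_mul_of_nonneg_left (hx i) (hw0 i)
    _ = δ := by rw [← sum_mul, hw1, one_mul]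

lemma abs_mul_add_one_sub_mul_le {θ x y δ : ℝ} (hθ0 : 0 ≤ θ) (hθ1 : θ ≤ 1)
    (hx : |x| ≤ δ) (hy : |y| ≤ δ) : |θ * x + (1 - θ) * y| ≤ δ :=
  calc |θ * x + (1 - θ) * y| ≤ |θ * x| + |(1 - θ) * y| := abs_add_le _ _
    _ = θ * |x| + (1 - θ) * |y| := by
        rw [abs_mul, abs_mul, abs_of_nonneg hθ0, abs_of_nonneg (sub_nonneg.2 hθ1)]
    _ ≤ θ * δ + (1 - θ) * δ := by gcongr
    _ = δ := by ring

lemma abs_apply_sub_apply_le_norm_sub [Fintype ι] (f g : ι → ℝ) (i : ι) :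
    |f i - g i| ≤ ‖f - g‖ := by
  simpa only [Pi.sub_apply, Real.norm_eq_abs] using norm_le_pi_norm (f - g) i

end

theorem statement4_general {S A : Type} [Fintype S] [Fintype A] [Nonempty A]
    (p : S → A → S → ℝ) (hp0 : ∀ s a s', 0 ≤ p s a s')
    (hp1 : ∀ s a, ∑ s', p s a s' = 1)
    (r : S → A → ℝ) (t : S → A → ℝ) (ht : ∀ s a, 0 < t s a)
    (α : ℝ) (hα : 0 < α) (hαt : ∀ s a, α ≤ t s a)
    (T : (S × A → ℝ) → (S × A → ℝ))
    (hT : ∀ (q : S × A → ℝ) (s : S) (a : A),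
      T q (s, a) = α * r s a / t s a
        + (α / t s a) * ∑ s', p s a s' * (⨆ a' : A, q (s', a'))
        + (1 - α / t s a) * q (s, a)) :
    (∀ q q' : S × A → ℝ, ‖T q - T q'‖ ≤ ‖q - q'‖) ∧
    (∀ (q : S × A → ℝ) (c : ℝ), T (fun x => q x + c) = fun x => T q x + c) := by
  constructor
  · intro q q'
    refine (pi_norm_le_iff_of_nonneg (norm_nonneg _)).2 fun ⟨s, a⟩ => ?_
    have hdiff : T q (s, a) - T q' (s, a)
        = (α / t s a) * ∑ s', p s a s' * ((⨆ a', q (s', a')) - ⨆ a', q' (s', a'))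
          + (1 - α / t s a) * (q (s, a) - q' (s, a)) := by
      simp only [hT, mul_sub, sum_sub_distrib]
      ring
    rw [Pi.sub_apply, Real.norm_eq_abs, hdiff]
    exact abs_mul_add_one_sub_mul_le (div_pos hα (ht s a)).le ((div_le_one (ht s a)).2 (hαt s a))
      (abs_sum_mul_le_of_abs_le (hp0 s a) (hp1 s a) fun s' =>
        abs_ciSup_sub_ciSup_le fun a' => abs_apply_sub_apply_le_norm_sub q q' (s', a'))
      (abs_apply_sub_apply_le_norm_sub q q' (s, a))
  · intro q c
    funext ⟨s, a⟩
    have hmax : ∀ s', ⨆ a', (q (s', a') + c) = (⨆ a', q (s', a')) + c := fun s' =>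
      (ciSup_add (Set.finite_range _).bddAbove c).symm
    have hshift : ∑ s', p s a s' * ((⨆ a', q (s', a')) + c)
        = (∑ s', p s a s' * ⨆ a', q (s', a')) + c := by
      simp only [mul_add, sum_add_distrib, ← sum_mul, hp1, one_mul]
    simp only [hT, hmax, hshift]
    ring

open Finset in
/-- Schweitzer's operator `T` on `ℝ^{S×A}` is sup-norm nonexpansive and
commutes with adding a constant to every component. -/
theorem statement4 {S A : Type} [Fintype S] [Fintype A] [Nonempty S] [Nonempty A]
    (p : S → A → S → ℝ) (hp0 : ∀ s a s', 0 ≤ p s a s')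
    (hp1 : ∀ s a, ∑ s', p s a s' = 1)
    (r : S → A → ℝ) (t : S → A → ℝ) (ht : ∀ s a, 0 < t s a)
    (α : ℝ) (hα : 0 < α) (hαt : ∀ s a, α ≤ t s a)
    (T : (S × A → ℝ) → (S × A → ℝ))
    (hT : ∀ (q : S × A → ℝ) (s : S) (a : A),
      T q (s, a) = α * r s a / t s a
        + (α / t s a) * ∑ s', p s a s' * (⨆ a' : A, q (s', a'))
        + (1 - α / t s a) * q (s, a)) :
    (∀ q q' : S × A → ℝ, ‖T q - T q'‖ ≤ ‖q - q'‖) ∧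
    (∀ (q : S × A → ℝ) (c : ℝ), T (fun x => q x + c) = fun x => T q x + c) :=
  statement4_general p hp0 hp1 r t ht α hα hαt T hT
end

section
/- Let S and A be finite nonempty sets, p : S × A × S → ℝ with p(s,a,·) a probability distribution on S for each (s,a), r : S × A → ℝ, and t : S × A → ℝ with t(s,a) > 0 for all (s,a). Let 0 < ᾱ ≤ min_{(s,a)} t(s,a). Define T(q)(s,a) = ᾱ·r(s,a)/t(s,a) + (ᾱ/t(s,a))·Σ_{s'} p(s,a,s')·max_{a'} q(s',a') + (1 − ᾱ/t(s,a))·q(s,a), and let T^o be defined in the same way with all rewards r(s,a) replaced by 0. Let f : ℝ^{S×A} → ℝ be Lipschitz continuous with pointwise scaling limit f∞, and define h(q) = T(q) − q − ᾱ·f(q) (adding the scalar ᾱ·f(q) to every component) and h∞(q) = T^o(q) − q − ᾱ·f∞(q). Then h is Lipschitz continuous, and h(c·q)/c converges to h∞(q) as c → ∞, uniformly on every compact subset of ℝ^{S×A}. -/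
open Finset in
/-- With `h(q) = T(q) − q − ᾱ f(q)` and `h∞(q) = T°(q) − q − ᾱ f∞(q)` (where
`T°` is `T` with zero rewards and `f∞` is the pointwise scaling limit of `f`),
`h` is Lipschitz and `h(c·q)/c → h∞(q)` uniformly on compact sets as `c → ∞`. -/
theorem statement5 {S A : Type} [Fintype S] [Fintype A] [Nonempty S] [Nonempty A]
    (p : S → A → S → ℝ) (hp0 : ∀ s a s', 0 ≤ p s a s')
    (hp1 : ∀ s a, ∑ s', p s a s' = 1)
    (r : S → A → ℝ) (t : S → A → ℝ) (ht : ∀ s a, 0 < t s a)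
    (α : ℝ) (hα : 0 < α) (hαt : ∀ s a, α ≤ t s a)
    (T To : (S × A → ℝ) → (S × A → ℝ))
    (hT : ∀ (q : S × A → ℝ) (s : S) (a : A),
      T q (s, a) = α * r s a / t s a
        + (α / t s a) * ∑ s', p s a s' * (⨆ a' : A, q (s', a'))
        + (1 - α / t s a) * q (s, a))
    (hTo : ∀ (q : S × A → ℝ) (s : S) (a : A),
      To q (s, a) = (α / t s a) * ∑ s', p s a s' * (⨆ a' : A, q (s', a'))
        + (1 - α / t s a) * q (s, a))
    (f finf : (S × A → ℝ) → ℝ)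
    (hfLip : ∃ L : ℝ, ∀ q q' : S × A → ℝ, |f q - f q'| ≤ L * ‖q - q'‖)
    (hflim : ∀ q : S × A → ℝ,
      Filter.Tendsto (fun c : ℝ => f (c • q) / c) Filter.atTop (nhds (finf q)))
    (h hinf : (S × A → ℝ) → (S × A → ℝ))
    (hh : ∀ (q : S × A → ℝ) (x : S × A), h q x = T q x - q x - α * f q)
    (hhinf : ∀ (q : S × A → ℝ) (x : S × A), hinf q x = To q x - q x - α * finf q) :
    (∃ L : ℝ, ∀ q q' : S × A → ℝ, ‖h q - h q'‖ ≤ L * ‖q - q'‖) ∧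
    (∀ K : Set (S × A → ℝ), IsCompact K →
      TendstoUniformlyOn (fun (c : ℝ) (q : S × A → ℝ) => c⁻¹ • h (c • q)) hinf
        Filter.atTop K) := by
  classical
  obtain ⟨L, hL⟩ := hfLip
  have hL' : ∀ q q' : S × A → ℝ, |f q - f q'| ≤ |L| * ‖q - q'‖ := fun q q' =>
    (hL q q').trans (mul_le_mul_of_nonneg_right (le_abs_self L) (norm_nonneg _))
  have hcomp : ∀ (g : S × A → ℝ) (x : S × A), |g x| ≤ ‖g‖ := fun g x => by
    simpa using norm_le_pi_norm g x
  have hsuplip : ∀ (q q' : S × A → ℝ) (s' : S),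
      |(⨆ a', q (s', a')) - ⨆ a', q' (s', a')| ≤ ‖q - q'‖ := by
    intro q q' s'
    have key : ∀ u v : S × A → ℝ, (⨆ a', u (s', a')) - (⨆ a', v (s', a')) ≤ ‖u - v‖ := by
      intro u v
      have h1 : (⨆ a', u (s', a')) ≤ (⨆ a', v (s', a')) + ‖u - v‖ := by
        apply ciSup_le
        intro a
        have hb : u (s', a) - v (s', a) ≤ ‖u - v‖ := by
          have := hcomp (u - v) (s', a)
          simp only [Pi.sub_apply] at this
          exact (le_abs_self _).trans this
        have h2 : v (s', a) ≤ ⨆ a', v (s', a') :=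
          le_ciSup (f := fun a' : A => v (s', a'))
            (Set.Finite.bddAbove (Set.finite_range _)) a
        linarith
      linarith
    rw [abs_sub_le_iff]
    refine ⟨key q q', ?_⟩
    have := key q' q
    rwa [norm_sub_rev] at this
  have hTlip : ∀ (q q' : S × A → ℝ) (x : S × A), |T q x - T q' x| ≤ ‖q - q'‖ := by
    rintro q q' ⟨s, a⟩
    rw [hT, hT]
    have ht0 := ht s a
    have hrat0 : 0 < α / t s a := div_pos hα ht0
    have hrat1 : α / t s a ≤ 1 := (div_le_one ht0).mpr (hαt s a)
    have hsum : |(∑ s', p s a s' * (⨆ a', q (s', a'))) -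
        ∑ s', p s a s' * (⨆ a', q' (s', a'))| ≤ ‖q - q'‖ := by
      rw [← Finset.sum_sub_distrib]
      refine (Finset.abs_sum_le_sum_abs _ _).trans ?_
      calc ∑ s', |p s a s' * (⨆ a', q (s', a')) - p s a s' * (⨆ a', q' (s', a'))|
          = ∑ s', p s a s' * |(⨆ a', q (s', a')) - ⨆ a', q' (s', a')| := by
            refine Finset.sum_congr rfl fun s' _ => ?_
            rw [← mul_sub, abs_mul, abs_of_nonneg (hp0 s a s')]
        _ ≤ ∑ s', p s a s' * ‖q - q'‖ :=
            Finset.sum_le_sum fun s' _ =>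
              mul_le_mul_of_nonneg_left (hsuplip q q' s') (hp0 s a s')
        _ = ‖q - q'‖ := by rw [← Finset.sum_mul, hp1 s a, one_mul]
    have hco : |q (s, a) - q' (s, a)| ≤ ‖q - q'‖ := by
      have := hcomp (q - q') (s, a); simpa using this
    set X := ∑ s' : S, p s a s' * ⨆ a', q (s', a') with hXdef
    set X' := ∑ s' : S, p s a s' * ⨆ a', q' (s', a') with hX'def
    have hid : (α * r s a / t s a + α / t s a * X + (1 - α / t s a) * q (s, a)) -
        (α * r s a / t s a + α / t s a * X' + (1 - α / t s a) * q' (s, a)) =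
        (α / t s a) * (X - X') + (1 - α / t s a) * (q (s, a) - q' (s, a)) := by ring
    rw [hid]
    refine (abs_add_le _ _).trans ?_
    rw [abs_mul, abs_mul, abs_of_pos hrat0, abs_of_nonneg (by linarith : (0:ℝ) ≤ 1 - α / t s a)]
    nlinarith [norm_nonneg (q - q'), mul_le_mul_of_nonneg_left hsum hrat0.le,
      mul_le_mul_of_nonneg_left hco (by linarith : (0:ℝ) ≤ 1 - α / t s a)]
  constructor
  · refine ⟨2 + α * |L|, fun q q' => ?_⟩
    rw [pi_norm_le_iff_of_nonneg
      (mul_nonneg (by nlinarith [mul_nonneg hα.le (abs_nonneg L)]) (norm_nonneg _))]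
    intro x
    have h1 := hTlip q q' x
    have h2 : |q x - q' x| ≤ ‖q - q'‖ := by have := hcomp (q - q') x; simpa using this
    have h3 : |α * (f q - f q')| ≤ α * (|L| * ‖q - q'‖) := by
      rw [abs_mul, abs_of_pos hα]
      exact mul_le_mul_of_nonneg_left (hL' q q') hα.le
    simp only [Pi.sub_apply, hh]
    rw [Real.norm_eq_abs]
    have hid : T q x - q x - α * f q - (T q' x - q' x - α * f q') =
        (T q x - T q' x) - (q x - q' x) - α * (f q - f q') := by ring
    rw [hid]
    obtain ⟨a1, b1⟩ := abs_le.mp h1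
    obtain ⟨a2, b2⟩ := abs_le.mp h2
    obtain ⟨a3, b3⟩ := abs_le.mp h3
    rw [abs_le]
    constructor <;> nlinarith [norm_nonneg (q - q')]
  · obtain ⟨R, hR⟩ := Finite.exists_le (fun x : S × A => |r x.1 x.2| / t x.1 x.2)
    have hR0 : 0 ≤ R := le_trans (div_nonneg (abs_nonneg _) (ht _ _).le) (hR (Classical.arbitrary _))
    have hkey : ∀ c : ℝ, 0 < c → ∀ (q : S × A → ℝ) (x : S × A),
        c⁻¹ * h (c • q) x - hinf q x =
          α * r x.1 x.2 / (t x.1 x.2 * c) - α * (f (c • q) / c - finf q) := by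
      rintro c hc q ⟨s, a⟩
      have hts := (ht s a).ne'
      have hsup : ∀ s' : S, (⨆ a' : A, c * q (s', a')) = c * ⨆ a' : A, q (s', a') := by
        intro s'
        rw [Real.mul_iSup_of_nonneg hc.le]
      have hps : (∑ s', p s a s' * (c * ⨆ a', q (s', a'))) =
          c * ∑ s', p s a s' * ⨆ a', q (s', a') := by
        rw [Finset.mul_sum]
        exact Finset.sum_congr rfl fun s' _ => by ring
      rw [hh, hhinf, hT, hTo]
      simp only [Pi.smul_apply, smul_eq_mul, hsup, hps]
      field_simp
      ring
    intro K hK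
    rw [Metric.tendstoUniformlyOn_iff]
    intro ε hε
    have hfunif : ∀ δ : ℝ, 0 < δ → ∀ᶠ c : ℝ in Filter.atTop,
        ∀ q ∈ K, |f (c • q) / c - finf q| < δ := by
      intro δ hδ
      set δ' := δ / (3 * (|L| + 1)) with hδ'def
      have hδ' : 0 < δ' := by positivity
      obtain ⟨σ, hσK, hσcov⟩ := hK.elim_nhds_subcover (fun q => Metric.ball q δ')
        (fun q _ => Metric.ball_mem_nhds q hδ')
      have hev : ∀ᶠ c : ℝ in Filter.atTop, ∀ q0 ∈ σ, |f (c • q0) / c - finf q0| < δ / 3 := by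
        rw [Filter.eventually_all_finset]
        intro q0 _
        have := Metric.tendsto_nhds.mp (hflim q0) (δ / 3) (by positivity)
        simpa [Real.dist_eq] using this
      filter_upwards [hev, Filter.eventually_ge_atTop (1 : ℝ)] with c hc hc1 q hq
      have hcpos : (0 : ℝ) < c := lt_of_lt_of_le one_pos hc1
      obtain ⟨q0, hq0σ, hqball⟩ := Set.mem_iUnion₂.mp (hσcov hq)
      have hd : ‖q - q0‖ < δ' := by
        rw [← dist_eq_norm]; exact Metric.mem_ball.mp hqball
      have hprod : (|L| + 1) * δ' = δ / 3 := by
        rw [hδ'def]; field_simp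
      have hLd : |L| * ‖q - q0‖ ≤ δ / 3 := by
        have : |L| * ‖q - q0‖ ≤ (|L| + 1) * δ' := by
          nlinarith [norm_nonneg (q - q0), abs_nonneg L]
        linarith
      have hg : |f (c • q) / c - f (c • q0) / c| ≤ |L| * ‖q - q0‖ := by
        rw [div_sub_div_same, abs_div, abs_of_pos hcpos, div_le_iff₀ hcpos]
        calc |f (c • q) - f (c • q0)| ≤ |L| * ‖c • q - c • q0‖ := hL' _ _
          _ = |L| * (c * ‖q - q0‖) := by
              rw [← smul_sub, norm_smul, Real.norm_eq_abs, abs_of_pos hcpos]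
          _ = |L| * ‖q - q0‖ * c := by ring
      have hfinf : |finf q0 - finf q| ≤ |L| * ‖q - q0‖ := by
        have htd : Filter.Tendsto (fun c' : ℝ => |f (c' • q0) / c' - f (c' • q) / c'|)
            Filter.atTop (nhds |finf q0 - finf q|) := ((hflim q0).sub (hflim q)).abs
        refine le_of_tendsto htd ?_
        filter_upwards [Filter.eventually_ge_atTop (1 : ℝ)] with c' hc'
        have hc'pos : (0 : ℝ) < c' := lt_of_lt_of_le one_pos hc'
        rw [div_sub_div_same, abs_div, abs_of_pos hc'pos, div_le_iff₀ hc'pos]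
        calc |f (c' • q0) - f (c' • q)| ≤ |L| * ‖c' • q0 - c' • q‖ := hL' _ _
          _ = |L| * (c' * ‖q - q0‖) := by
              rw [← smul_sub, norm_smul, Real.norm_eq_abs, abs_of_pos hc'pos, norm_sub_rev]
          _ = |L| * ‖q - q0‖ * c' := by ring
      have hc0 := hc q0 hq0σ
      have t1 := abs_sub_le (f (c • q) / c) (f (c • q0) / c) (finf q)
      have t2 := abs_sub_le (f (c • q0) / c) (finf q0) (finf q)
      linarith
    have hrc : Filter.Tendsto (fun c : ℝ => α * R / c) Filter.atTop (nhds 0) :=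
      Filter.Tendsto.div_atTop tendsto_const_nhds Filter.tendsto_id
    have hev1 : ∀ᶠ c : ℝ in Filter.atTop, |α * R / c| < ε / 2 := by
      have := Metric.tendsto_nhds.mp hrc (ε / 2) (by positivity)
      simpa only [Real.dist_eq, sub_zero] using this
    have hε' : α * (ε / (2 * (α + 1))) < ε / 2 := by
      rw [show α * (ε / (2 * (α + 1))) = α * ε / (2 * (α + 1)) from by ring,
        div_lt_div_iff₀ (by positivity) (by norm_num : (0:ℝ) < 2)]
      nlinarith
    filter_upwards [hev1, hfunif (ε / (2 * (α + 1))) (by positivity),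
      Filter.eventually_ge_atTop (1 : ℝ)] with c h1 h2 hc1 q hq
    have hcpos : (0 : ℝ) < c := lt_of_lt_of_le one_pos hc1
    rw [dist_pi_lt_iff hε]
    intro x
    rw [Real.dist_eq]
    have hid := hkey c hcpos q x
    have e1 : |α * r x.1 x.2 / (t x.1 x.2 * c)| ≤ α * R / c := by
      rw [abs_div, abs_mul, abs_of_pos hα, abs_of_pos (mul_pos (ht _ _) hcpos)]
      rw [div_le_div_iff₀ (mul_pos (ht _ _) hcpos) hcpos]
      have hrt : |r x.1 x.2| ≤ R * t x.1 x.2 := by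
        have := hR x
        rw [div_le_iff₀ (ht _ _)] at this
        exact this
      nlinarith [mul_le_mul_of_nonneg_left hrt (mul_pos hα hcpos).le]
    have e2 : |α * (f (c • q) / c - finf q)| < ε / 2 := by
      rw [abs_mul, abs_of_pos hα]
      calc α * |f (c • q) / c - finf q| < α * (ε / (2 * (α + 1))) :=
            mul_lt_mul_of_pos_left (h2 q hq) hα
        _ < ε / 2 := hε'
    have habs : |hinf q x - c⁻¹ * h (c • q) x| ≤
        |α * r x.1 x.2 / (t x.1 x.2 * c)| + |α * (f (c • q) / c - finf q)| := by
      rw [abs_sub_comm, hid]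
      exact abs_sub _ _
    have hfinal : |α * r x.1 x.2 / (t x.1 x.2 * c)| < ε / 2 :=
      lt_of_le_of_lt e1 (lt_of_le_of_lt (le_abs_self _) h1)
    simp only [Pi.smul_apply, smul_eq_mul]
    linarith
end

section
/- Let T : ℝ^d → ℝ^d be Lipschitz continuous with T(q + c) = T(q) + c for all q ∈ ℝ^d and c ∈ ℝ, let f : ℝ^d → ℝ be Lipschitz continuous, and let ᾱ > 0 and r* ∈ ℝ. Suppose x, y : ℝ → ℝ^d are differentiable and satisfy ẋ(t) = T(x(t)) − x(t) − ᾱ·f(x(t)) and ẏ(t) = T(y(t)) − y(t) − ᾱ·r* for all t ∈ ℝ, with x(0) = y(0). Then x(t) = y(t) + z(t) for all t ∈ ℝ, where z : ℝ → ℝ is the unique differentiable function satisfying z(0) = 0 and ż(t) = ᾱ·r* − ᾱ·f(y(t) + z(t)) for all t ∈ ℝ. -/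
/-- Gronwall-type lemma: a function with derivative bounded by `C * ‖g‖`
and `g 0 = 0` vanishes everywhere. -/
lemma statement7_gronwall_zero {E : Type*} [NormedAddCommGroup E] [NormedSpace ℝ E]
    {C : ℝ} :
    ∀ (g G : ℝ → E), g 0 = 0 → (∀ t, HasDerivAt g (G t) t) →
      (∀ t, ‖G t‖ ≤ C * ‖g t‖) → ∀ t, g t = 0 := by
  have key : ∀ (g G : ℝ → E), g 0 = 0 → (∀ t, HasDerivAt g (G t) t) →
      (∀ t, ‖G t‖ ≤ C * ‖g t‖) → ∀ t, 0 ≤ t → g t = 0 := by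
    intro g G g0 hg hb t ht
    have h := norm_le_gronwallBound_of_norm_deriv_right_le (f := g) (f' := G)
      (δ := 0) (K := max C 0) (ε := 0) (a := 0) (b := t)
      (fun s _ => (hg s).continuousAt.continuousWithinAt)
      (fun s _ => (hg s).hasDerivWithinAt)
      (by simp [g0])
      (fun s _ => by
        have h1 := hb s
        have h2 : C * ‖g s‖ ≤ max C 0 * ‖g s‖ + 0 := by
          nlinarith [norm_nonneg (g s), le_max_left C 0]
        linarith)
      t ⟨ht, le_refl t⟩
    rw [gronwallBound_ε0] at h
    simp only [zero_mul] at h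
    exact norm_le_zero_iff.mp h
  intro g G g0 hg hb t
  rcases le_or_gt 0 t with ht | ht
  · exact key g G g0 hg hb t ht
  · have hrev : ∀ s : ℝ, HasDerivAt (fun u => g (-u)) ((-1 : ℝ) • G (-s)) s := by
      intro s
      exact (hg (-s)).scomp s (hasDerivAt_neg s)
    have := key (fun u => g (-u)) (fun s => (-1 : ℝ) • G (-s))
      (by simpa using g0) hrev
      (fun s => by simpa using hb (-s)) (-t) (by linarith)
    simpa using this

/-- If `ẋ = T(x) − x − ᾱ f(x)` and `ẏ = T(y) − y − ᾱ r*` with `x(0) = y(0)`,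
where `T` is Lipschitz and commutes with scalar translation and `f` is
Lipschitz, then `x(t) = y(t) + z(t)` where `z` is the unique solution of the
scalar ODE `ż(t) = ᾱ r* − ᾱ f(y(t) + z(t))`, `z(0) = 0`. -/
theorem statement7 {d : ℕ} (hd : 1 ≤ d)
    (T : (Fin d → ℝ) → (Fin d → ℝ))
    (hTLip : ∃ L : ℝ, ∀ q q' : Fin d → ℝ, ‖T q - T q'‖ ≤ L * ‖q - q'‖)
    (hTtrans : ∀ (q : Fin d → ℝ) (c : ℝ),
      T (fun i => q i + c) = fun i => T q i + c)
    (f : (Fin d → ℝ) → ℝ)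
    (hfLip : ∃ L : ℝ, ∀ q q' : Fin d → ℝ, |f q - f q'| ≤ L * ‖q - q'‖)
    (α rstar : ℝ) (hα : 0 < α)
    (x y : ℝ → (Fin d → ℝ))
    (hx : ∀ t : ℝ, HasDerivAt x (fun i => T (x t) i - x t i - α * f (x t)) t)
    (hy : ∀ t : ℝ, HasDerivAt y (fun i => T (y t) i - y t i - α * rstar) t)
    (hxy0 : x 0 = y 0) :
    ∃ z : ℝ → ℝ,
      (z 0 = 0 ∧
        ∀ t : ℝ, HasDerivAt z (α * rstar - α * f (fun i => y t i + z t)) t) ∧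
      (∀ w : ℝ → ℝ,
        (w 0 = 0 ∧
          ∀ t : ℝ, HasDerivAt w (α * rstar - α * f (fun i => y t i + w t)) t) →
        w = z) ∧
      (∀ t : ℝ, x t = fun i => y t i + z t) := by
  haveI : Nonempty (Fin d) := ⟨⟨0, hd⟩⟩
  obtain ⟨L, hL⟩ := hTLip
  obtain ⟨M, hM⟩ := hfLip
  set L' := max L 0 with hL'def
  set M' := max M 0 with hM'def
  have hL' : ∀ q q' : Fin d → ℝ, ‖T q - T q'‖ ≤ L' * ‖q - q'‖ := by
    intro q q'
    calc ‖T q - T q'‖ ≤ L * ‖q - q'‖ := hL q q'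
    _ ≤ L' * ‖q - q'‖ := by
        apply mul_le_mul_of_nonneg_right (le_max_left L 0) (norm_nonneg _)
  have hM' : ∀ q q' : Fin d → ℝ, |f q - f q'| ≤ M' * ‖q - q'‖ := by
    intro q q'
    calc |f q - f q'| ≤ M * ‖q - q'‖ := hM q q'
    _ ≤ M' * ‖q - q'‖ := by
        apply mul_le_mul_of_nonneg_right (le_max_left M 0) (norm_nonneg _)
  set i₀ : Fin d := ⟨0, hd⟩ with hi₀
  set z : ℝ → ℝ := fun t => x t i₀ - y t i₀ with hz
  -- component derivatives
  have hxc : ∀ t (i : Fin d),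
      HasDerivAt (fun s => x s i) (T (x t) i - x t i - α * f (x t)) t :=
    fun t i => hasDerivAt_pi.1 (hx t) i
  have hyc : ∀ t (i : Fin d),
      HasDerivAt (fun s => y s i) (T (y t) i - y t i - α * rstar) t :=
    fun t i => hasDerivAt_pi.1 (hy t) i
  -- the difference v
  set v : ℝ → Fin d → ℝ := fun t i => x t i - y t i - (x t i₀ - y t i₀) with hv
  set V : ℝ → Fin d → ℝ := fun t i =>
    (T (x t) i - x t i) - (T (y t) i - y t i)
      - ((T (x t) i₀ - x t i₀) - (T (y t) i₀ - y t i₀)) with hV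
  have hvderiv : ∀ t, HasDerivAt v (V t) t := by
    intro t
    rw [hasDerivAt_pi]
    intro i
    have h := (((hxc t i).sub (hyc t i)).sub ((hxc t i₀).sub (hyc t i₀)))
    convert h using 1
    · rfl
    simp only [hV]
    ring
  -- key algebraic identity for V
  have hxrep : ∀ t, x t = fun i => (y t i + v t i) + z t := by
    intro t
    funext i
    simp only [hv, hz]
    ring
  have hVrep : ∀ t, V t = fun i =>
      (T (fun j => y t j + v t j) i - T (y t) i)
        - (T (fun j => y t j + v t j) i₀ - T (y t) i₀) - v t i := by
    intro t
    funext i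
    have hTx : T (x t) = fun i => T (fun j => y t j + v t j) i + z t := by
      rw [hxrep t]
      exact hTtrans (fun j => y t j + v t j) (z t)
    have hvi₀ : v t i₀ = 0 := by simp [hv]
    have hxi : x t i = y t i + v t i + z t := by rw [hxrep t]
    have hxi₀ : x t i₀ = y t i₀ + v t i₀ + z t := by rw [hxrep t]
    simp only [hV, hTx]
    rw [hxi, hxi₀, hvi₀]
    ring
  -- norm bound on V
  have hVbound : ∀ t, ‖V t‖ ≤ (2 * L' + 1) * ‖v t‖ := by
    intro t
    set A : Fin d → ℝ := fun i => T (fun j => y t j + v t j) i - T (y t) i with hA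
    have hAnorm : ‖A‖ ≤ L' * ‖v t‖ := by
      have := hL' (fun j => y t j + v t j) (y t)
      have heq : (fun j => y t j + v t j) - y t = v t := by
        funext j; simp
      rw [heq] at this
      exact this
    have hV' : V t = (A - (fun _ => A i₀)) - v t := by
      rw [hVrep t]
      funext i
      simp [hA]
    rw [hV']
    have h1 : ‖(A - fun _ => A i₀) - v t‖ ≤ ‖A - fun _ => A i₀‖ + ‖v t‖ :=
      norm_sub_le _ _
    have h2 : ‖A - (fun _ => A i₀)‖ ≤ ‖A‖ + ‖(fun _ : Fin d => A i₀)‖ :=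
      norm_sub_le _ _
    have h3 : ‖(fun _ : Fin d => A i₀)‖ = ‖A i₀‖ := pi_norm_const (A i₀)
    have h4 : ‖A i₀‖ ≤ ‖A‖ := norm_le_pi_norm A i₀
    have : ‖(A - fun _ => A i₀) - v t‖ ≤ 2 * ‖A‖ + ‖v t‖ := by
      rw [h3] at h2; linarith
    calc ‖(A - fun _ => A i₀) - v t‖ ≤ 2 * ‖A‖ + ‖v t‖ := this
    _ ≤ 2 * (L' * ‖v t‖) + ‖v t‖ := by linarith
    _ = (2 * L' + 1) * ‖v t‖ := by ring
  have hv0 : v 0 = 0 := by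
    funext i
    simp [hv, hxy0]
  have hvzero : ∀ t, v t = 0 :=
    statement7_gronwall_zero v V hv0 hvderiv hVbound
  -- hence x t = y t + z t
  have hxz : ∀ t, x t = fun i => y t i + z t := by
    intro t
    funext i
    have := congrFun (hvzero t) i
    simp only [hv, Pi.zero_apply] at this
    simp only [hz]
    linarith
  -- derivative of z
  have hzderiv : ∀ t, HasDerivAt z (α * rstar - α * f (fun i => y t i + z t)) t := by
    intro t
    have h := (hxc t i₀).sub (hyc t i₀)
    have hTx : T (x t) = fun i => T (y t) i + z t := by
      conv_lhs => rw [hxz t]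
      exact hTtrans (y t) (z t)
    have hxi₀ : x t i₀ = y t i₀ + z t := by rw [hxz t]
    have hfx : f (x t) = f (fun i => y t i + z t) := by rw [hxz t]
    have heq : T (x t) i₀ - x t i₀ - α * f (x t) - (T (y t) i₀ - y t i₀ - α * rstar)
        = α * rstar - α * f (fun i => y t i + z t) := by
      rw [hTx, hxi₀, hfx]
      ring
    rw [heq] at h
    exact h
  refine ⟨z, ⟨by simp [hz, hxy0], hzderiv⟩, ?_, hxz⟩
  -- uniqueness
  intro w ⟨hw0, hwderiv⟩
  have hg : ∀ t, HasDerivAt (fun s => w s - z s)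
      (α * (f (fun i => y t i + z t) - f (fun i => y t i + w t))) t := by
    intro t
    have h := (hwderiv t).sub (hzderiv t)
    convert h using 1
    · rfl
    · rfl
    · rfl
    ring
  have hgbound : ∀ t, ‖α * (f (fun i => y t i + z t) - f (fun i => y t i + w t))‖
      ≤ (α * M') * ‖w t - z t‖ := by
    intro t
    have h1 := hM' (fun i => y t i + z t) (fun i => y t i + w t)
    have heq : (fun i => y t i + z t) - (fun i => y t i + w t)
        = fun _ : Fin d => z t - w t := by
      funext i; simp only [Pi.sub_apply]; ring
    rw [heq, pi_norm_const] at h1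
    have h2 : ‖(z t - w t : ℝ)‖ = ‖w t - z t‖ := by
      rw [Real.norm_eq_abs, Real.norm_eq_abs, abs_sub_comm]
    rw [h2] at h1
    calc ‖α * (f (fun i => y t i + z t) - f (fun i => y t i + w t))‖
        = α * |f (fun i => y t i + z t) - f (fun i => y t i + w t)| := by
          rw [norm_mul, Real.norm_eq_abs, Real.norm_eq_abs, abs_of_pos hα]
    _ ≤ α * (M' * ‖w t - z t‖) := by
          apply mul_le_mul_of_nonneg_left h1 (le_of_lt hα)
    _ = (α * M') * ‖w t - z t‖ := by ring
  have hwz0 : w 0 - z 0 = 0 := by simp [hw0, hz, hxy0]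
  have := statement7_gronwall_zero (fun s => w s - z s)
    (fun t => α * (f (fun i => y t i + z t) - f (fun i => y t i + w t)))
    hwz0 hg hgbound
  funext t
  have ht : w t - z t = 0 := this t
  linarith
end

section
/- Let f : ℝ^d → ℝ be Lipschitz continuous with respect to the sup norm and SISTr, let ᾱ > 0 and r* ∈ ℝ. Let y : ℝ → ℝ^d be continuous with y(t) → ȳ as t → ∞ for some ȳ ∈ ℝ^d, and let z̄ be the unique real number with f(ȳ + z̄) = r*. If z : ℝ → ℝ is differentiable and satisfies ż(t) = ᾱ·(r* − f(y(t) + z(t))) for all t ∈ ℝ, then z(t) → z̄ as t → ∞. -/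
/-- Trap lemma: if `z' ≤ -c` whenever `t ≥ T` and `z t ≥ b`, then eventually `z t < b`. -/
lemma trap_lemma (z z' : ℝ → ℝ) (hz : ∀ t, HasDerivAt z (z' t) t) (T b c : ℝ) (hc : 0 < c)
    (h : ∀ t, T ≤ t → b ≤ z t → z' t ≤ -c) : ∀ᶠ t in Filter.atTop, z t < b := by
  have zcont : Continuous z :=
    continuous_iff_continuousAt.mpr fun t => (hz t).continuousAt
  -- Step 1: there is some `t₀ ≥ T` with `z t₀ < b`.
  have step1 : ∃ t₀, T ≤ t₀ ∧ z t₀ < b := by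
    by_contra hcon
    push_neg at hcon
    set w : ℝ → ℝ := fun t => z t + c * t with hwdef
    have hw' : ∀ t, HasDerivAt w (z' t + c) t := by
      intro t
      have h1 : HasDerivAt (fun x : ℝ => c * x) c t := by
        simpa using (hasDerivAt_id t).const_mul c
      exact (hz t).add h1
    have anti : AntitoneOn w (Set.Ici T) := by
      have hwc : Continuous w := zcont.add (continuous_const.mul continuous_id)
      apply antitoneOn_of_deriv_nonpos (convex_Ici T) hwc.continuousOn
      · intro x _
        exact (hw' x).differentiableAt.differentiableWithinAt
      · intro x hx
        rw [interior_Ici] at hx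
        rw [(hw' x).deriv]
        have hle : T ≤ x := le_of_lt hx
        have := h x hle (hcon x hle)
        linarith
    set t : ℝ := max T ((z T + c * T - b) / c + 1) with htdef
    have ht1 : T ≤ t := le_max_left _ _
    have ht2 : (z T + c * T - b) / c + 1 ≤ t := le_max_right _ _
    have hwle : w t ≤ w T := anti (Set.self_mem_Ici) ht1 ht1
    have hbz : b ≤ z t := hcon t ht1
    have hcd : c * ((z T + c * T - b) / c) = z T + c * T - b := by
      field_simp
    simp only [hwdef] at hwle
    nlinarith [mul_le_mul_of_nonneg_left ht2 (le_of_lt hc)]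
  obtain ⟨t₀, ht₀T, ht₀⟩ := step1
  rw [Filter.eventually_atTop]
  refine ⟨t₀, fun t₁ ht₁ => ?_⟩
  by_contra hb
  push_neg at hb
  set B : Set ℝ := Set.Icc t₀ t₁ ∩ z ⁻¹' Set.Ici b with hBdef
  have hBne : B.Nonempty := ⟨t₁, ⟨ht₁, le_refl _⟩, hb⟩
  have hBclosed : IsClosed B := isClosed_Icc.inter (isClosed_Ici.preimage zcont)
  have hBbdd : BddBelow B := ⟨t₀, fun x hx => hx.1.1⟩
  set s : ℝ := sInf B with hsdef
  have hsB : s ∈ B := hBclosed.csInf_mem hBne hBbdd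
  have hzs : b ≤ z s := hsB.2
  have hst₀ : t₀ < s := by
    rcases lt_or_eq_of_le hsB.1.1 with h' | h'
    · exact h'
    · exact absurd hzs (by rw [← h']; linarith)
  have hTs : T ≤ s := le_trans ht₀T (le_of_lt hst₀)
  have hderiv : z' s ≤ -c := h s hTs hzs
  have hslope := hasDerivAt_iff_tendsto_slope.mp (hz s)
  have hmem : Set.Iio (0 : ℝ) ∈ nhds (z' s) := Iio_mem_nhds (by linarith)
  have hneg : ∀ᶠ u in nhdsWithin s {s}ᶜ, slope z s u < 0 := hslope hmem
  have hneg' : ∀ᶠ u in nhdsWithin s (Set.Iio s), slope z s u < 0 :=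
    hneg.filter_mono (nhdsWithin_mono s fun u hu => ne_of_lt hu)
  have hIoo : Set.Ioo t₀ s ∈ nhdsWithin s (Set.Iio s) :=
    Ioo_mem_nhdsLT_of_mem ⟨hst₀, le_refl s⟩
  obtain ⟨u, hu1, hu2⟩ :=
    (hneg'.and (Filter.eventually_of_mem hIoo fun x hx => hx)).exists
  have husb : z u < b := by
    by_contra hge
    push_neg at hge
    have huB : u ∈ B := ⟨⟨le_of_lt hu2.1, le_trans (le_of_lt hu2.2) hsB.1.2⟩, hge⟩
    exact absurd (csInf_le hBbdd huB) (not_le.mpr hu2.2)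
  rw [slope_def_field, div_neg_iff] at hu1
  rcases hu1 with ⟨hnum, hden⟩ | ⟨hnum, hden⟩
  · linarith
  · linarith [hu2.2]

/-- If `y(t) → ȳ`, `f(ȳ + z̄) = r*`, and `ż(t) = ᾱ (r* − f(y(t) + z(t)))`,
then `z(t) → z̄` as `t → ∞`, for Lipschitz SISTr `f`. -/
theorem statement8 {d : ℕ} (hd : 1 ≤ d) (f : (Fin d → ℝ) → ℝ)
    (hLip : ∃ L : ℝ, ∀ x y : Fin d → ℝ, |f x - f y| ≤ L * ‖x - y‖)
    (hS : SISTr f) (α rstar : ℝ) (hα : 0 < α)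
    (y : ℝ → (Fin d → ℝ)) (hyc : Continuous y)
    (ybar : Fin d → ℝ)
    (hylim : Filter.Tendsto y Filter.atTop (nhds ybar))
    (zbar : ℝ) (hzbar : f (fun i => ybar i + zbar) = rstar)
    (z : ℝ → ℝ)
    (hz : ∀ t : ℝ, HasDerivAt z (α * (rstar - f (fun i => y t i + z t))) t) :
    Filter.Tendsto z Filter.atTop (nhds zbar) := by
  obtain ⟨L, hL⟩ := hLip
  set L' : ℝ := max L 1 with hL'def
  have hL'pos : (0 : ℝ) < L' := lt_of_lt_of_le one_pos (le_max_right _ _)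
  have hL' : ∀ x y : Fin d → ℝ, |f x - f y| ≤ L' * ‖x - y‖ := fun x y =>
    (hL x y).trans (mul_le_mul_of_nonneg_right (le_max_left _ _) (norm_nonneg _))
  set g : ℝ → ℝ := fun c => f (fun i => ybar i + c) with hgdef
  obtain ⟨gmono, _⟩ := hS ybar
  have hgz : g zbar = rstar := hzbar
  rw [Metric.tendsto_atTop]
  intro ε hε
  have hδ₁ : 0 < g (zbar + ε) - rstar := by
    have h' : g zbar < g (zbar + ε) := gmono (show zbar < zbar + ε by linarith)
    rw [hgz] at h'
    linarith
  have hδ₂ : 0 < rstar - g (zbar - ε) := by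
    have h' : g (zbar - ε) < g zbar := gmono (show zbar - ε < zbar by linarith)
    rw [hgz] at h'
    linarith
  set δ : ℝ := min (g (zbar + ε) - rstar) (rstar - g (zbar - ε)) with hδdef
  have hδ : 0 < δ := lt_min hδ₁ hδ₂
  obtain ⟨T, hT⟩ := Metric.tendsto_atTop.mp hylim (δ / (2 * L')) (by positivity)
  have key : ∀ t, T ≤ t → |f (fun i => y t i + z t) - g (z t)| < δ / 2 := by
    intro t ht
    have h1 := hL' (fun i => y t i + z t) (fun i => ybar i + z t)
    have h2 : (fun i => y t i + z t) - (fun i => ybar i + z t) = y t - ybar := by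
      funext i
      simp [Pi.sub_apply]
    rw [h2] at h1
    have h3 : ‖y t - ybar‖ < δ / (2 * L') := by
      have := hT t ht
      rwa [dist_eq_norm] at this
    calc |f (fun i => y t i + z t) - g (z t)| ≤ L' * ‖y t - ybar‖ := h1
      _ < L' * (δ / (2 * L')) := mul_lt_mul_of_pos_left h3 hL'pos
      _ = δ / 2 := by field_simp
  have hup : ∀ᶠ t in Filter.atTop, z t < zbar + ε := by
    apply trap_lemma z (fun t => α * (rstar - f (fun i => y t i + z t))) hz T
      (zbar + ε) (α * (δ / 2)) (by positivity)
    intro t ht hbt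
    have hk := abs_lt.mp (key t ht)
    have hg1 : g (zbar + ε) ≤ g (z t) := gmono.le_iff_le.mpr hbt
    have hδle : δ ≤ g (zbar + ε) - rstar := min_le_left _ _
    have hf : rstar + δ / 2 ≤ f (fun i => y t i + z t) := by linarith [hk.1]
    nlinarith
  have hlo : ∀ᶠ t in Filter.atTop, -z t < -(zbar - ε) := by
    apply trap_lemma (fun t => -z t)
      (fun t => -(α * (rstar - f (fun i => y t i + z t)))) (fun t => (hz t).neg) T
      (-(zbar - ε)) (α * (δ / 2)) (by positivity)
    intro t ht hbt
    have hzt : z t ≤ zbar - ε := by linarith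
    have hk := abs_lt.mp (key t ht)
    have hg2 : g (z t) ≤ g (zbar - ε) := gmono.le_iff_le.mpr hzt
    have hδle : δ ≤ rstar - g (zbar - ε) := min_le_right _ _
    have hf : f (fun i => y t i + z t) ≤ rstar - δ / 2 := by linarith [hk.2]
    nlinarith
  obtain ⟨N, hN⟩ := Filter.eventually_atTop.mp (hup.and hlo)
  refine ⟨N, fun t ht => ?_⟩
  have h := hN t ht
  rw [Real.dist_eq, abs_lt]
  constructor <;> [linarith [h.2]; linarith [h.1]]
end

section
/- Let T : ℝ^d → ℝ^d be Lipschitz continuous with T(q + c) = T(q) + c for all q ∈ ℝ^d and c ∈ ℝ, let f : ℝ^d → ℝ be Lipschitz continuous and SISTr, and let ᾱ > 0, r* ∈ ℝ. Assume that for every x₀ ∈ ℝ^d there exists a differentiable y : ℝ → ℝ^d with y(0) = x₀, ẏ(t) = T(y(t)) − y(t) − ᾱ·r* for all t, and y(t) → ȳ as t → ∞ for some ȳ ∈ ℝ^d satisfying T(ȳ) = ȳ + ᾱ·r*. Then every differentiable x : ℝ → ℝ^d satisfying ẋ(t) = T(x(t)) − x(t) − ᾱ·f(x(t)) for all t converges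 as t → ∞ to some q* ∈ ℝ^d satisfying T(q*) − q* = ᾱ·f(q*) (as a constant vector) and f(q*) = r*. -/
/-- One-sided trapping lemma: if whenever `g t ≥ b` (for `t ≥ t₀`) the derivative
of `g` is at most `-δ < 0`, then eventually `g t ≤ b`. -/
lemma aux_le (g D : ℝ → ℝ) (hg : ∀ t, HasDerivAt g (D t) t) (b δ t₀ : ℝ) (hδ : 0 < δ)
    (hD : ∀ t, t₀ ≤ t → b ≤ g t → D t ≤ -δ) : ∀ᶠ t in Filter.atTop, g t ≤ b := by
  have hgc : Continuous g := by
    rw [continuous_iff_continuousAt]; exact fun t => (hg t).continuousAt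
  -- Step 1: there is some `t₁ ≥ t₀` with `g t₁ ≤ b`.
  have step1 : ∃ t₁, t₀ ≤ t₁ ∧ g t₁ ≤ b := by
    by_contra hcon
    push_neg at hcon
    have hDall : ∀ t, t₀ ≤ t → D t ≤ -δ := fun t ht => hD t ht (hcon t ht).le
    have hanti : AntitoneOn (fun t => g t + δ * t) (Set.Ici t₀) := by
      apply antitoneOn_of_deriv_nonpos (convex_Ici t₀)
      · exact (hgc.add (continuous_const.mul continuous_id)).continuousOn
      · intro u hu
        exact ((hg u).add ((hasDerivAt_id u).const_mul δ)).differentiableAt.differentiableWithinAt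
      · intro u hu
        rw [interior_Ici] at hu
        have : deriv (fun t => g t + δ * t) u = D u + δ * 1 := by
          exact ((hg u).add ((hasDerivAt_id u).const_mul δ)).deriv
        rw [this]
        have := hDall u hu.le
        linarith
    have hb0 : b < g t₀ := hcon t₀ le_rfl
    have hpos : 0 < (g t₀ - b) / δ := div_pos (by linarith) hδ
    have ht₂ : t₀ ≤ t₀ + (g t₀ - b) / δ + 1 := by linarith
    have hmono : g (t₀ + (g t₀ - b) / δ + 1) + δ * (t₀ + (g t₀ - b) / δ + 1) ≤
        g t₀ + δ * t₀ := hanti Set.self_mem_Ici (Set.mem_Ici.mpr ht₂) ht₂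
    have hexp : δ * (t₀ + (g t₀ - b) / δ + 1) = δ * t₀ + (g t₀ - b) + δ := by
      field_simp
    have hcon2 := hcon _ ht₂
    rw [hexp] at hmono
    linarith
  obtain ⟨t₁, ht₁, hgt₁⟩ := step1
  -- Step 2: for all `t ≥ t₁`, `g t ≤ b`.
  filter_upwards [Filter.eventually_ge_atTop t₁] with t₂ ht₂
  by_contra hgt
  push_neg at hgt
  have h12 : t₁ < t₂ := lt_of_le_of_ne ht₂ (by rintro rfl; linarith)
  have hScomp : IsCompact (Set.Icc t₁ t₂ ∩ g ⁻¹' Set.Iic b) :=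
    isCompact_Icc.inter_right (isClosed_Iic.preimage hgc)
  have hSne : (Set.Icc t₁ t₂ ∩ g ⁻¹' Set.Iic b).Nonempty := ⟨t₁, ⟨le_rfl, h12.le⟩, hgt₁⟩
  obtain ⟨s, hsS, hsSup⟩ : ∃ s, s ∈ Set.Icc t₁ t₂ ∩ g ⁻¹' Set.Iic b ∧
      ∀ u ∈ Set.Icc t₁ t₂ ∩ g ⁻¹' Set.Iic b, u ≤ s :=
    ⟨sSup _, hScomp.sSup_mem hSne, fun u hu => le_csSup hScomp.bddAbove hu⟩
  have hgs : g s ≤ b := hsS.2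
  have hs2 : s < t₂ := lt_of_le_of_ne hsS.1.2 (by rintro rfl; exact absurd hsS.2 (not_le.mpr hgt))
  have hmid : ∀ u ∈ Set.Ioo s t₂, b < g u := by
    intro u hu
    by_contra hle
    push_neg at hle
    have huS : u ∈ Set.Icc t₁ t₂ ∩ g ⁻¹' Set.Iic b :=
      ⟨⟨le_trans hsS.1.1 hu.1.le, hu.2.le⟩, hle⟩
    exact absurd (hsSup u huS) (not_le.mpr hu.1)
  have hanti : StrictAntiOn g (Set.Icc s t₂) := by
    apply strictAntiOn_of_deriv_neg (convex_Icc s t₂) hgc.continuousOn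
    intro u hu
    rw [interior_Icc] at hu
    have hub : b < g u := hmid u hu
    have hut₀ : t₀ ≤ u := le_trans ht₁ (le_trans hsS.1.1 hu.1.le)
    rw [(hg u).deriv]
    have := hD u hut₀ hub.le
    linarith
  have := hanti (Set.left_mem_Icc.mpr hs2.le) (Set.right_mem_Icc.mpr hs2.le) hs2
  linarith

/-- Every solution of `ẋ = T(x) − x − ᾱ f(x)` converges to a point `q*` with
`T(q*) − q* = ᾱ f(q*)` (as a constant vector) and `f(q*) = r*`, provided each
solution of the auxiliary ODE `ẏ = T(y) − y − ᾱ r*` converges to an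
equilibrium. -/
theorem statement9 {d : ℕ} (hd : 1 ≤ d)
    (T : (Fin d → ℝ) → (Fin d → ℝ))
    (hTLip : ∃ L : ℝ, ∀ q q' : Fin d → ℝ, ‖T q - T q'‖ ≤ L * ‖q - q'‖)
    (hTtrans : ∀ (q : Fin d → ℝ) (c : ℝ),
      T (fun i => q i + c) = fun i => T q i + c)
    (f : (Fin d → ℝ) → ℝ)
    (hfLip : ∃ L : ℝ, ∀ q q' : Fin d → ℝ, |f q - f q'| ≤ L * ‖q - q'‖)
    (hS : SISTr f) (α rstar : ℝ) (hα : 0 < α)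
    (haux : ∀ x₀ : Fin d → ℝ, ∃ y : ℝ → (Fin d → ℝ), ∃ ybar : Fin d → ℝ,
      y 0 = x₀ ∧
      (∀ t : ℝ, HasDerivAt y (fun i => T (y t) i - y t i - α * rstar) t) ∧
      Filter.Tendsto y Filter.atTop (nhds ybar) ∧
      T ybar = fun i => ybar i + α * rstar)
    (x : ℝ → (Fin d → ℝ))
    (hx : ∀ t : ℝ, HasDerivAt x (fun i => T (x t) i - x t i - α * f (x t)) t) :
    ∃ qstar : Fin d → ℝ,
      Filter.Tendsto x Filter.atTop (nhds qstar) ∧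
      (∀ i, T qstar i - qstar i = α * f qstar) ∧
      f qstar = rstar := by
  obtain ⟨L, hL⟩ := hTLip
  obtain ⟨Lf, hLf⟩ := hfLip
  -- basic continuity
  have hxc : Continuous x := by
    rw [continuous_iff_continuousAt]; exact fun t => (hx t).continuousAt
  have hfc : Continuous f := by
    apply (LipschitzWith.of_dist_le_mul (K := Real.toNNReal Lf) ?_).continuous
    intro q q'
    rw [Real.dist_eq, dist_eq_norm, Real.coe_toNNReal']
    exact le_trans (hLf q q') (mul_le_mul_of_nonneg_right (le_max_left _ _) (norm_nonneg _))
  -- the shift function g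
  set h : ℝ → ℝ := fun t => α * (rstar - f (x t)) with hhdef
  have hhc : Continuous h := continuous_const.mul (continuous_const.sub (hfc.comp hxc))
  set g : ℝ → ℝ := fun t => ∫ s in (0:ℝ)..t, h s with hgdef
  have hg : ∀ t, HasDerivAt g (h t) t := by
    intro t
    exact intervalIntegral.integral_hasDerivAt_right (hhc.intervalIntegrable _ _)
      hhc.aestronglyMeasurable.stronglyMeasurableAtFilter hhc.continuousAt
  have hg0 : g 0 = 0 := intervalIntegral.integral_same
  -- the auxiliary trajectory y := x - g·𝟙
  set y : ℝ → (Fin d → ℝ) := fun t i => x t i - g t with hydef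
  have hxy : ∀ t, x t = fun i => y t i + g t := by
    intro t; funext i; simp [hydef]
  have hy : ∀ t, HasDerivAt y (fun i => T (y t) i - y t i - α * rstar) t := by
    intro t
    rw [hasDerivAt_pi]
    intro i
    have hxi : HasDerivAt (fun s => x s i) (T (x t) i - x t i - α * f (x t)) t :=
      hasDerivAt_pi.mp (hx t) i
    have := hxi.sub (hg t)
    convert this using 1
    · rfl
    have hT : T (y t) = fun i => T (x t) i + (-(g t)) := by
      have h1 := hTtrans (x t) (-(g t))
      have hyx : y t = fun i => x t i + -(g t) := by
        funext j; simp [hydef]; ring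
      rw [hyx, h1]
    rw [hT]
    simp only [hydef, hhdef, Pi.sub_apply]
    try ring
  -- identify y with the solution from `haux` using ODE uniqueness
  obtain ⟨z, ybar, hz0, hz, hzlim, hybar⟩ := haux (x 0)
  have hy0 : y 0 = z 0 := by
    rw [hz0]; funext i; simp [hydef, hg0]
  set v : (Fin d → ℝ) → (Fin d → ℝ) := fun q => fun i => T q i - q i - α * rstar with hvdef
  have hvlip : LipschitzWith (Real.toNNReal L + 1) v := by
    apply LipschitzWith.of_dist_le_mul
    intro q q'
    rw [dist_eq_norm, dist_eq_norm]
    have hsub : v q - v q' = (T q - T q') - (q - q') := by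
      funext i; simp [hvdef]; ring
    rw [hsub]
    calc ‖(T q - T q') - (q - q')‖ ≤ ‖T q - T q'‖ + ‖q - q'‖ := norm_sub_le _ _
      _ ≤ L * ‖q - q'‖ + ‖q - q'‖ := by linarith [hL q q']
      _ ≤ ((Real.toNNReal L : ℝ)) * ‖q - q'‖ + 1 * ‖q - q'‖ := by
          have hLle : L ≤ (Real.toNNReal L : ℝ) := by
            rw [Real.coe_toNNReal']; exact le_max_left _ _
          have := mul_le_mul_of_nonneg_right hLle (norm_nonneg (q - q'))
          linarith
      _ = (((Real.toNNReal L + 1 : NNReal) : ℝ)) * ‖q - q'‖ := by push_cast; ring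
  have hyz : ∀ t, 0 ≤ t → y t = z t := by
    intro t ht
    rcases eq_or_lt_of_le ht with rfl | htpos
    · exact hy0
    · have := ODE_solution_unique (v := fun _ : ℝ => v) (K := Real.toNNReal L + 1)
        (f := y) (g := z) (a := 0) (b := t)
        (fun _ => hvlip)
        (fun s _ => ((hy s).continuousAt).continuousWithinAt)
        (fun s _ => ((hy s).hasDerivWithinAt))
        (fun s _ => ((hz s).continuousAt).continuousWithinAt)
        (fun s _ => ((hz s).hasDerivWithinAt))
        hy0
      exact this (Set.mem_Icc.mpr ⟨ht, le_rfl⟩)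
  have hylim : Filter.Tendsto y Filter.atTop (nhds ybar) := by
    apply hzlim.congr'
    filter_upwards [Filter.eventually_ge_atTop (0:ℝ)] with t ht
    exact (hyz t ht).symm
  -- the target shift g*
  obtain ⟨hmono, hsurj⟩ := hS ybar
  obtain ⟨gstar, hgstar₀⟩ := hsurj rstar
  have hgstar : f (fun i => ybar i + gstar) = rstar := hgstar₀
  -- main claim: g → g*
  have hglim : Filter.Tendsto g Filter.atTop (nhds gstar) := by
    rw [Metric.tendsto_atTop]
    intro ε hε
    have hε2 : 0 < ε / 2 := by linarith
    set ηp := f (fun i => ybar i + (gstar + ε / 2)) - rstar with hηp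
    set ηm := rstar - f (fun i => ybar i + (gstar - ε / 2)) with hηm
    have hηppos : 0 < ηp := by
      have h : f (fun i => ybar i + gstar) < f (fun i => ybar i + (gstar + ε / 2)) :=
        hmono (show gstar < gstar + ε / 2 by linarith)
      rw [hgstar] at h
      rw [hηp]; linarith
    have hηmpos : 0 < ηm := by
      have h : f (fun i => ybar i + (gstar - ε / 2)) < f (fun i => ybar i + gstar) :=
        hmono (show gstar - ε / 2 < gstar by linarith)
      rw [hgstar] at h
      rw [hηm]; linarith
    set η := min ηp ηm with hηdef
    have hηpos : 0 < η := lt_min hηppos hηmpos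
    -- eventually f(y t + c) is close to f(ybar + c), uniformly in c
    have hclose : ∀ᶠ t in Filter.atTop,
        ∀ c : ℝ, |f (fun i => y t i + c) - f (fun i => ybar i + c)| ≤ η / 2 := by
      have hn : Filter.Tendsto (fun t => Lf * ‖y t - ybar‖) Filter.atTop (nhds 0) := by
        have := (tendsto_iff_norm_sub_tendsto_zero.mp hylim).const_mul Lf
        simpa using this
      filter_upwards [hn.eventually_le_const (show (0:ℝ) < η/2 by linarith)] with t ht c
      calc |f (fun i => y t i + c) - f (fun i => ybar i + c)| ≤
          Lf * ‖(fun i => y t i + c) - fun i => ybar i + c‖ := hLf _ _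
        _ = Lf * ‖y t - ybar‖ := by
            congr 2; funext i; simp
        _ ≤ η / 2 := ht
    rw [Filter.eventually_atTop] at hclose
    obtain ⟨t₀, ht₀⟩ := hclose
    -- derivative sign conditions
    have hDup : ∀ t, t₀ ≤ t → gstar + ε / 2 ≤ g t → h t ≤ -(α * η / 2) := by
      intro t ht hgt
      have h1 : f (fun i => ybar i + g t) - η / 2 ≤ f (fun i => y t i + g t) := by
        have := ht₀ t ht (g t)
        have := abs_le.mp this
        linarith [this.1]
      have h2 : f (fun i => ybar i + (gstar + ε / 2)) ≤ f (fun i => ybar i + g t) := by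
        rcases eq_or_lt_of_le hgt with heq | hlt
        · rw [← heq]
        · exact le_of_lt (show f (fun i => ybar i + (gstar + ε / 2)) <
            f (fun i => ybar i + g t) from hmono hlt)
      have h3 : rstar + η ≤ f (fun i => ybar i + (gstar + ε / 2)) := by
        have : η ≤ ηp := min_le_left _ _
        rw [hηp] at this; linarith
      have hfx : f (x t) = f (fun i => y t i + g t) := by rw [hxy t]
      have : rstar + η / 2 ≤ f (x t) := by rw [hfx]; linarith
      show α * (rstar - f (x t)) ≤ -(α * η / 2)
      have : rstar - f (x t) ≤ -(η / 2) := by linarith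
      calc α * (rstar - f (x t)) ≤ α * (-(η/2)) := by
            exact mul_le_mul_of_nonneg_left this hα.le
        _ = -(α * η / 2) := by ring
    have hDdown : ∀ t, t₀ ≤ t → g t ≤ gstar - ε / 2 → α * η / 2 ≤ h t := by
      intro t ht hgt
      have h1 : f (fun i => y t i + g t) ≤ f (fun i => ybar i + g t) + η / 2 := by
        have := abs_le.mp (ht₀ t ht (g t))
        linarith [this.2]
      have h2 : f (fun i => ybar i + g t) ≤ f (fun i => ybar i + (gstar - ε / 2)) := by
        rcases eq_or_lt_of_le hgt with heq | hlt
        · rw [heq]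
        · exact le_of_lt (show f (fun i => ybar i + g t) <
            f (fun i => ybar i + (gstar - ε / 2)) from hmono hlt)
      have h3 : f (fun i => ybar i + (gstar - ε / 2)) ≤ rstar - η := by
        have : η ≤ ηm := min_le_right _ _
        rw [hηm] at this; linarith
      have hfx : f (x t) = f (fun i => y t i + g t) := by rw [hxy t]
      have : f (x t) ≤ rstar - η / 2 := by rw [hfx]; linarith
      show α * η / 2 ≤ α * (rstar - f (x t))
      have h4 : η / 2 ≤ rstar - f (x t) := by linarith
      calc α * η / 2 = α * (η / 2) := by ring
        _ ≤ α * (rstar - f (x t)) := mul_le_mul_of_nonneg_left h4 hα.le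
    have hδpos : 0 < α * η / 2 := by positivity
    have hup : ∀ᶠ t in Filter.atTop, g t ≤ gstar + ε / 2 :=
      aux_le g h hg (gstar + ε / 2) (α * η / 2) t₀ hδpos hDup
    have hdown : ∀ᶠ t in Filter.atTop, gstar - ε / 2 ≤ g t := by
      have := aux_le (fun t => -g t) (fun t => -h t) (fun t => (hg t).neg)
        (-(gstar - ε / 2)) (α * η / 2) t₀ hδpos ?_
      · filter_upwards [this] with t ht; linarith
      · intro t ht hle
        have : g t ≤ gstar - ε / 2 := by linarith
        have := hDdown t ht this
        linarith
    rw [Filter.eventually_atTop] at hup hdown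
    obtain ⟨N₁, hN₁⟩ := hup
    obtain ⟨N₂, hN₂⟩ := hdown
    refine ⟨max N₁ N₂, fun t ht => ?_⟩
    have h1 := hN₁ t (le_trans (le_max_left _ _) ht)
    have h2 := hN₂ t (le_trans (le_max_right _ _) ht)
    rw [Real.dist_eq, abs_lt]
    constructor <;> linarith
  -- conclude
  refine ⟨fun i => ybar i + gstar, ?_, ?_, ?_⟩
  · rw [tendsto_pi_nhds]
    intro i
    have h1 : Filter.Tendsto (fun t => y t i) Filter.atTop (nhds (ybar i)) :=
      tendsto_pi_nhds.mp hylim i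
    have := h1.add hglim
    apply this.congr
    intro t
    rw [hxy t]
  · intro i
    have hT : T (fun i => ybar i + gstar) = fun i => T ybar i + gstar := hTtrans ybar gstar
    rw [hT]
    simp only
    rw [hybar]
    simp only
    rw [hgstar]
    ring
  · exact hgstar
end

section
/- Let f : ℝ^d → ℝ be Lipschitz continuous with constant L_f with respect to the sup norm and SISTr, let ᾱ > 0, r* ∈ ℝ, and let x̄ ∈ ℝ^d satisfy f(x̄) = r*. Let δ₀ > 0 and let y : ℝ → ℝ^d be continuous with ‖y(t) − x̄‖∞ ≤ δ₀ for all t ≥ 0. Let z : ℝ → ℝ be differentiable with z(0) = 0 and ż(t) = ᾱ·(r* − f(y(t) + z(t))) for all t. Then, with δ = (L_f + 1)·δ₀, one has |z(t)| ≤ ε_{x̄,δ} for all t ≥ 0. -/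
/-!
Since `f` is `Lf`-Lipschitz and `‖y t - x̄‖∞ ≤ δ₀`, translating `y t` and `x̄` by the same
scalar changes the value of `f` by at most `Lf δ₀`. By the choice of `ε`, this gives
`f (y t + ε) ≥ r* + δ₀ > r*` and `f (y t - ε) ≤ r* - δ₀ < r*`, so `ż < 0` whenever `z = ε`
and `ż > 0` whenever `z = -ε`. Starting from `z 0 = 0`, the trajectory can therefore never
cross the barriers `±ε`.
-/

theorem le_of_hasDerivAt_neg_of_eq {z z' : ℝ → ℝ} {B : ℝ} (hz : ∀ t, HasDerivAt z (z' t) t)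
    (h0 : z 0 ≤ B) (hB : ∀ t, 0 ≤ t → z t = B → z' t < 0) {t : ℝ} (ht : 0 ≤ t) : z t ≤ B :=
  image_le_of_deriv_right_lt_deriv_boundary (B := fun _ => B) (B' := fun _ => 0)
    (fun s _ => (hz s).continuousAt.continuousWithinAt) (fun s _ => (hz s).hasDerivWithinAt)
    h0 (fun _ => hasDerivAt_const _ _) (fun s hs => hB s hs.1) ⟨ht, le_rfl⟩

theorem SISTrAt.lipschitz_const_pos {d : ℕ} {f : (Fin d → ℝ) → ℝ} {x : Fin d → ℝ} {L : ℝ}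
    (hS : SISTrAt f x) (hLip : ∀ x y : Fin d → ℝ, |f x - f y| ≤ L * ‖x - y‖) : 0 < L := by
  have hlt : f x < f (fun i => x i + 1) := by
    simpa only [add_zero] using hS.1 zero_lt_one
  have hpos : 0 < L * ‖(fun i => x i + 1) - x‖ :=
    (abs_pos.2 (sub_pos.2 hlt).ne').trans_le (hLip _ _)
  exact pos_of_mul_pos_left hpos (norm_nonneg _)

section Translate

variable {ι : Type*} [Fintype ι] {f : (ι → ℝ) → ℝ} {L δ : ℝ} {x y : ι → ℝ}

theorem abs_sub_apply_translate_le (hLip : ∀ x y : ι → ℝ, |f x - f y| ≤ L * ‖x - y‖)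
    (hL : 0 ≤ L) (hy : ‖y - x‖ ≤ δ) (c : ℝ) :
    |f (fun i => y i + c) - f (fun i => x i + c)| ≤ L * δ := by
  have hsub : ((fun i => y i + c) - fun i => x i + c) = y - x := by
    ext i; simp
  calc _ ≤ L * ‖(fun i => y i + c) - fun i => x i + c‖ := hLip _ _
    _ ≤ L * δ := by rw [hsub]; gcongr

theorem lt_apply_translate (hLip : ∀ x y : ι → ℝ, |f x - f y| ≤ L * ‖x - y‖)
    (hL : 0 ≤ L) (hδ : 0 < δ) (hy : ‖y - x‖ ≤ δ) {c : ℝ}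
    (hc : (L + 1) * δ ≤ f (fun i => x i + c) - f x) : f x < f (fun i => y i + c) := by
  have := abs_le.1 (abs_sub_apply_translate_le hLip hL hy c)
  linarith

theorem apply_translate_lt (hLip : ∀ x y : ι → ℝ, |f x - f y| ≤ L * ‖x - y‖)
    (hL : 0 ≤ L) (hδ : 0 < δ) (hy : ‖y - x‖ ≤ δ) {c : ℝ}
    (hc : (L + 1) * δ ≤ f x - f (fun i => x i + c)) : f (fun i => y i + c) < f x := by
  have := abs_le.1 (abs_sub_apply_translate_le hLip hL hy c)
  linarith

end Translate

theorem statement10_general {d : ℕ} (f : (Fin d → ℝ) → ℝ) (Lf : ℝ)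
    (hLip : ∀ x y : Fin d → ℝ, |f x - f y| ≤ Lf * ‖x - y‖)
    (hS : SISTr f) (α rstar : ℝ) (hα : 0 < α)
    (xbar : Fin d → ℝ) (hxbar : f xbar = rstar)
    (δ₀ : ℝ) (hδ₀ : 0 < δ₀)
    (y : ℝ → (Fin d → ℝ))
    (hy : ∀ t : ℝ, 0 ≤ t → ‖y t - xbar‖ ≤ δ₀)
    (z : ℝ → ℝ) (hz0 : z 0 = 0)
    (hz : ∀ t : ℝ, HasDerivAt z (α * (rstar - f (fun i => y t i + z t))) t)
    (ε : ℝ)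
    (hε : IsLeast {e : ℝ | 0 < e ∧
        min (f (fun i => xbar i + e) - f xbar)
          (f xbar - f (fun i => xbar i - e)) = (Lf + 1) * δ₀} ε) :
    ∀ t : ℝ, 0 ≤ t → |z t| ≤ ε := by
  obtain ⟨⟨hε0, hmin⟩, -⟩ := hε
  subst hxbar
  have hL : 0 ≤ Lf := ((hS xbar).lipschitz_const_pos hLip).le
  have hright : (Lf + 1) * δ₀ ≤ f (fun i => xbar i + ε) - f xbar := hmin ▸ min_le_left _ _
  have hleft : (Lf + 1) * δ₀ ≤ f xbar - f (fun i => xbar i + -ε) := by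
    simpa only [sub_eq_add_neg] using hmin ▸ min_le_right _ _
  intro t ht
  rw [abs_le, neg_le]
  constructor
  · refine le_of_hasDerivAt_neg_of_eq (fun s => (hz s).neg) (by simp [hz0, hε0.le])
      (fun s hs hzs => ?_) ht
    rw [neg_eq_iff_eq_neg.1 hzs]
    have := apply_translate_lt hLip hL hδ₀ (hy s hs) hleft
    nlinarith
  · refine le_of_hasDerivAt_neg_of_eq hz (by simp [hz0, hε0.le]) (fun s hs hzs => ?_) ht
    rw [hzs]
    have := lt_apply_translate hLip hL hδ₀ (hy s hs) hright
    nlinarith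

/-- If `f(x̄) = r*`, `‖y(t) − x̄‖∞ ≤ δ₀` for `t ≥ 0`, `z(0) = 0` and
`ż(t) = ᾱ (r* − f(y(t) + z(t)))`, then `|z(t)| ≤ ε_{x̄,δ}` for all `t ≥ 0`,
where `δ = (L_f + 1) δ₀` and `ε_{x̄,δ}` is the smallest `ε > 0` with
`min (f(x̄+ε) − f(x̄)) (f(x̄) − f(x̄−ε)) = δ`. -/
theorem statement10 {d : ℕ} (hd : 1 ≤ d) (f : (Fin d → ℝ) → ℝ) (Lf : ℝ)
    (hLip : ∀ x y : Fin d → ℝ, |f x - f y| ≤ Lf * ‖x - y‖)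
    (hS : SISTr f) (α rstar : ℝ) (hα : 0 < α)
    (xbar : Fin d → ℝ) (hxbar : f xbar = rstar)
    (δ₀ : ℝ) (hδ₀ : 0 < δ₀)
    (y : ℝ → (Fin d → ℝ)) (hyc : Continuous y)
    (hy : ∀ t : ℝ, 0 ≤ t → ‖y t - xbar‖ ≤ δ₀)
    (z : ℝ → ℝ) (hz0 : z 0 = 0)
    (hz : ∀ t : ℝ, HasDerivAt z (α * (rstar - f (fun i => y t i + z t))) t)
    (ε : ℝ)
    (hε : IsLeast {e : ℝ | 0 < e ∧
        min (f (fun i => xbar i + e) - f xbar)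
          (f xbar - f (fun i => xbar i - e)) = (Lf + 1) * δ₀} ε) :
    ∀ t : ℝ, 0 ≤ t → |z t| ≤ ε :=
  statement10_general f Lf hLip hS α rstar hα xbar hxbar δ₀ hδ₀ y hy z hz0 hz ε hε
end

section
/- Let T : ℝ^d → ℝ^d be Lipschitz continuous with T(q + c) = T(q) + c for all q and c, let f : ℝ^d → ℝ be Lipschitz continuous and SISTr, and let ᾱ > 0, r* ∈ ℝ. Let E := { q ∈ ℝ^d : T(q) − q = ᾱ·f(q) (as a constant vector) }, and assume E is nonempty and compact and that every q̄ ∈ E satisfies f(q̄) = r*. Assume further that for every x₀ ∈ ℝ^d there exists a differentiable y : ℝ → ℝ^d with y(0) = x₀, ẏ(t) = T(y(t)) − y(t) − ᾱ·r* for all t, such that for every q̄ ∈ E the map t ↦ ‖y(t) − q̄‖∞ is nonincreasing on [0, ∞). Then E is Lyapunov stable for the ODE ẋ = T(x) − x − ᾱ·f(x): for every ε > 0 there exists δ > 0 such that every differentiable x : ℝ → ℝ^d satisfying ẋ(t) = T(x(t)) − x(t) − ᾱ·f(x(t)) for all t and inf_{q̄ ∈ E} ‖x(0) − q̄‖∞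 ≤ δ satisfies inf_{q̄ ∈ E} ‖x(t) − q̄‖∞ ≤ ε for all t ≥ 0. -/
/-- Barrier lemma: if `c 0 ≤ κ` and the derivative of `c` is negative whenever `c ≥ κ`
(for nonnegative times), then `c ≤ κ` on `[0, ∞)`. -/
lemma barrier_le {κ : ℝ} (c g : ℝ → ℝ) (hc : ∀ t, HasDerivAt c (g t) t)
    (h0 : c 0 ≤ κ) (hg : ∀ t, 0 ≤ t → κ ≤ c t → g t < 0) :
    ∀ t, 0 ≤ t → c t ≤ κ := by
  intro t₁ ht₁
  by_contra hcon
  push_neg at hcon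
  have hcc : Continuous c := continuous_iff_continuousAt.2 fun s => (hc s).continuousAt
  set S : Set ℝ := Set.Icc 0 t₁ ∩ c ⁻¹' Set.Iic κ with hS
  have hSc : IsClosed S := isClosed_Icc.inter (isClosed_Iic.preimage hcc)
  have hScpt : IsCompact S := isCompact_Icc.of_isClosed_subset hSc Set.inter_subset_left
  have hSne : S.Nonempty := ⟨0, ⟨le_rfl, ht₁⟩, h0⟩
  obtain ht₀ := hScpt.sSup_mem hSne
  set t₀ := sSup S
  have ht₀0 : 0 ≤ t₀ := ht₀.1.1
  have ht₀1 : t₀ ≤ t₁ := ht₀.1.2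
  have hct₀ : c t₀ ≤ κ := ht₀.2
  have ht₀lt : t₀ < t₁ := lt_of_le_of_ne ht₀1 (by intro h; rw [h] at hct₀; linarith)
  have hgt : ∀ s ∈ Set.Ioc t₀ t₁, κ < c s := by
    intro s hs
    by_contra hle
    push_neg at hle
    have hsS : s ∈ S := ⟨⟨le_trans ht₀0 hs.1.le, hs.2⟩, hle⟩
    exact absurd (le_csSup hScpt.bddAbove hsS) (not_le.2 hs.1)
  have hanti : StrictAntiOn c (Set.Icc t₀ t₁) := by
    apply strictAntiOn_of_deriv_neg (convex_Icc _ _) hcc.continuousOn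
    intro s hs
    rw [interior_Icc] at hs
    rw [(hc s).deriv]
    exact hg s (le_trans ht₀0 hs.1.le) (hgt s ⟨hs.1, hs.2.le⟩).le
  have := hanti (Set.left_mem_Icc.2 ht₀1) (Set.right_mem_Icc.2 ht₀1) ht₀lt
  linarith

/-- The equilibrium set `E = {q : T(q) − q = ᾱ f(q)}` is Lyapunov stable for
the ODE `ẋ = T(x) − x − ᾱ f(x)`, under the stated assumptions. Distances are
w.r.t. the sup norm (which is the distance of the Pi metric space). -/
theorem statement11 {d : ℕ} (hd : 1 ≤ d)
    (T : (Fin d → ℝ) → (Fin d → ℝ))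
    (hTLip : ∃ L : ℝ, ∀ q q' : Fin d → ℝ, ‖T q - T q'‖ ≤ L * ‖q - q'‖)
    (hTtrans : ∀ (q : Fin d → ℝ) (c : ℝ),
      T (fun i => q i + c) = fun i => T q i + c)
    (f : (Fin d → ℝ) → ℝ)
    (hfLip : ∃ L : ℝ, ∀ q q' : Fin d → ℝ, |f q - f q'| ≤ L * ‖q - q'‖)
    (hS : SISTr f) (α rstar : ℝ) (hα : 0 < α)
    (E : Set (Fin d → ℝ))
    (hE : E = {q : Fin d → ℝ | ∀ i, T q i - q i = α * f q})
    (hEne : E.Nonempty) (hEcpt : IsCompact E)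
    (hEr : ∀ qbar ∈ E, f qbar = rstar)
    (haux : ∀ x₀ : Fin d → ℝ, ∃ y : ℝ → (Fin d → ℝ),
      y 0 = x₀ ∧
      (∀ t : ℝ, HasDerivAt y (fun i => T (y t) i - y t i - α * rstar) t) ∧
      (∀ qbar ∈ E, AntitoneOn (fun t : ℝ => ‖y t - qbar‖) (Set.Ici 0))) :
    ∀ ε : ℝ, 0 < ε → ∃ δ : ℝ, 0 < δ ∧
      ∀ x : ℝ → (Fin d → ℝ),
        (∀ t : ℝ, HasDerivAt x (fun i => T (x t) i - x t i - α * f (x t)) t) →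
        Metric.infDist (x 0) E ≤ δ →
        ∀ t : ℝ, 0 ≤ t → Metric.infDist (x t) E ≤ ε := by
  intro ε hε
  haveI : Nonempty (Fin d) := ⟨⟨0, hd⟩⟩
  obtain ⟨Lf, hLf0⟩ := hfLip
  set L : ℝ := max Lf 1 with hLdef
  have hL : 0 < L := lt_of_lt_of_le one_pos (le_max_right _ _)
  have hLf : ∀ q q' : Fin d → ℝ, |f q - f q'| ≤ L * ‖q - q'‖ := fun q q' =>
    le_trans (hLf0 q q') (mul_le_mul_of_nonneg_right (le_max_left _ _) (norm_nonneg _))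
  have hfc : Continuous f := by
    have : LipschitzWith (Real.toNNReal L) f := by
      apply LipschitzWith.of_dist_le_mul
      intro a b
      rw [Real.dist_eq, dist_eq_norm, Real.coe_toNNReal L hL.le]
      exact hLf a b
    exact this.continuous
  set κ : ℝ := ε / 2 with hκdef
  have hκ : 0 < κ := by positivity
  -- lower barrier data
  have hF₁c : Continuous (fun q : Fin d → ℝ => f (fun i => q i - κ)) := by
    apply hfc.comp
    exact continuous_pi fun i => (continuous_apply i).sub continuous_const
  obtain ⟨q₁, hq₁E, hq₁max⟩ := hEcpt.exists_isMaxOn hEne hF₁c.continuousOn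
  set m₁ : ℝ := rstar - f (fun i => q₁ i - κ) with hm₁def
  have hm₁ : 0 < m₁ := by
    have h1 : f (fun i => q₁ i + -κ) < f (fun i => q₁ i + (0:ℝ)) :=
      (hS q₁).1 (show (-κ) < 0 by linarith)
    have e1 : (fun i => q₁ i + -κ) = fun i => q₁ i - κ := by funext i; ring
    have e2 : (fun i => q₁ i + (0:ℝ)) = q₁ := by funext i; ring
    rw [e1, e2, hEr q₁ hq₁E] at h1
    simpa [hm₁def] using sub_pos.2 h1
  -- upper barrier data
  have hF₂c : Continuous (fun q : Fin d → ℝ => f (fun i => q i + κ)) := by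
    apply hfc.comp
    exact continuous_pi fun i => (continuous_apply i).add continuous_const
  obtain ⟨q₂, hq₂E, hq₂min⟩ := hEcpt.exists_isMinOn hEne hF₂c.continuousOn
  set m₂ : ℝ := f (fun i => q₂ i + κ) - rstar with hm₂def
  have hm₂ : 0 < m₂ := by
    have h1 : f (fun i => q₂ i + (0:ℝ)) < f (fun i => q₂ i + κ) :=
      (hS q₂).1 (show (0:ℝ) < κ by linarith)
    have e2 : (fun i => q₂ i + (0:ℝ)) = q₂ := by funext i; ring
    rw [e2, hEr q₂ hq₂E] at h1
    simpa [hm₂def] using sub_pos.2 h1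
  refine ⟨min κ (min (m₁ / (2 * L)) (m₂ / (2 * L))), by positivity, ?_⟩
  set δ : ℝ := min κ (min (m₁ / (2 * L)) (m₂ / (2 * L))) with hδdef
  have hδκ : δ ≤ κ := min_le_left _ _
  have hδm₁ : L * δ ≤ m₁ / 2 := by
    have : δ ≤ m₁ / (2 * L) := le_trans (min_le_right _ _) (min_le_left _ _)
    calc L * δ ≤ L * (m₁ / (2 * L)) := mul_le_mul_of_nonneg_left this hL.le
      _ = m₁ / 2 := by field_simp
  have hδm₂ : L * δ ≤ m₂ / 2 := by
    have : δ ≤ m₂ / (2 * L) := le_trans (min_le_right _ _) (min_le_right _ _)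
    calc L * δ ≤ L * (m₂ / (2 * L)) := mul_le_mul_of_nonneg_left this hL.le
      _ = m₂ / 2 := by field_simp
  intro x hx hx0 t ht
  -- nearest equilibrium point
  obtain ⟨qb, hqbE, hqbd⟩ := hEcpt.exists_infDist_eq_dist hEne (x 0)
  have hd0 : ‖x 0 - qb‖ ≤ δ := by
    rw [← dist_eq_norm, ← hqbd]; exact hx0
  have hxc : Continuous x := continuous_iff_continuousAt.2 fun s => (hx s).continuousAt
  set h : ℝ → ℝ := fun s => α * (f (x s) - rstar) with hhdef
  have hhc : Continuous h := continuous_const.mul ((hfc.comp hxc).sub continuous_const)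
  set c : ℝ → ℝ := fun u => ∫ s in (0:ℝ)..u, h s with hcdef
  have hc : ∀ u, HasDerivAt c (h u) u := fun u =>
    intervalIntegral.integral_hasDerivAt_right (hhc.intervalIntegrable 0 u)
      (hhc.stronglyMeasurableAtFilter _ _) hhc.continuousAt
  have hc0 : c 0 = 0 := intervalIntegral.integral_same
  set φ : ℝ →L[ℝ] (Fin d → ℝ) := ContinuousLinearMap.pi fun _ => ContinuousLinearMap.id ℝ ℝ with hφdef
  set z : ℝ → (Fin d → ℝ) := fun u => x u + φ (c u) with hzdef
  have hzeq : ∀ u, z u = fun i => x u i + c u := fun u => rfl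
  have hz : ∀ u, HasDerivAt z (fun i => T (z u) i - z u i - α * rstar) u := by
    intro u
    have h1 : HasDerivAt (fun v => φ (c v)) (φ (h u)) u :=
      φ.hasFDerivAt.comp_hasDerivAt u (hc u)
    have h2 := (hx u).add h1
    refine HasDerivAt.congr_deriv h2 ?_
    symm
    funext i
    have hT : T (z u) = fun i => T (x u) i + c u := by rw [hzeq u]; exact hTtrans (x u) (c u)
    show T (z u) i - z u i - α * rstar =
      (T (x u) i - x u i - α * f (x u)) + φ (h u) i
    rw [hT, hzeq u]
    show (T (x u) i + c u) - (x u i + c u) - α * rstar =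
      (T (x u) i - x u i - α * f (x u)) + h u
    rw [hhdef]
    ring
  have hzc : Continuous z := continuous_iff_continuousAt.2 fun s => (hz s).continuousAt
  obtain ⟨y, hy0, hy', hymon⟩ := haux (x 0)
  have hyc : Continuous y := continuous_iff_continuousAt.2 fun s => (hy' s).continuousAt
  -- Lipschitz constant for the autonomous field
  obtain ⟨LT, hLT⟩ := hTLip
  set K : NNReal := Real.toNNReal LT + 1 with hKdef
  have hFlip : LipschitzWith K (fun v : Fin d → ℝ => fun i => T v i - v i - α * rstar) := by
    apply LipschitzWith.of_dist_le_mul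
    intro a b
    rw [dist_eq_norm, dist_eq_norm]
    have e : (fun i => T a i - a i - α * rstar) - (fun i => T b i - b i - α * rstar)
        = (T a - T b) - (a - b) := by funext i; simp [Pi.sub_apply]; ring
    rw [e]
    have h1 : ‖(T a - T b) - (a - b)‖ ≤ ‖T a - T b‖ + ‖a - b‖ := norm_sub_le _ _
    have h2 : ‖T a - T b‖ ≤ LT * ‖a - b‖ := hLT a b
    have h3 : LT ≤ (Real.toNNReal LT : ℝ) := Real.le_coe_toNNReal LT
    have h4 : (K : ℝ) = (Real.toNNReal LT : ℝ) + 1 := by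
      rw [hKdef]; push_cast; ring
    have h5 : (0:ℝ) ≤ ‖a - b‖ := norm_nonneg _
    rw [h4]
    nlinarith
  -- uniqueness: y = z on [0, ∞)
  have hyz : ∀ s, 0 ≤ s → y s = z s := by
    intro s hs
    have heq := ODE_solution_unique (v := fun _ v => fun i => T v i - v i - α * rstar)
      (fun _ => hFlip) (hyc.continuousOn (s := Set.Icc 0 s))
      (fun u _ => (hy' u).hasDerivWithinAt)
      (hzc.continuousOn)
      (fun u _ => (hz u).hasDerivWithinAt)
      (by rw [hy0, hzeq 0, hc0]; funext i; simp)
    exact heq (Set.right_mem_Icc.2 hs)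
  have hzb : ∀ s, 0 ≤ s → ‖z s - qb‖ ≤ δ := by
    intro s hs
    rw [← hyz s hs]
    calc ‖y s - qb‖ ≤ ‖y 0 - qb‖ :=
          hymon qb hqbE (Set.mem_Ici.2 le_rfl) (Set.mem_Ici.2 hs) hs
      _ = ‖x 0 - qb‖ := by rw [hy0]
      _ ≤ δ := hd0
  -- the two barrier hypotheses
  have hbar_up : ∀ s, 0 ≤ s → κ ≤ c s → h s < 0 := by
    intro s hs hcs
    have hzbs := hzb s hs
    have step1 : f (x s) ≤ f (fun i => z s i - κ) := by
      have hm := (hS (z s)).1.monotone (show -(c s) ≤ -κ by linarith)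
      have e1 : (fun i => z s i + -(c s)) = x s := by
        funext i; rw [hzeq s]; ring
      have e2 : (fun i => z s i + -κ) = fun i => z s i - κ := by funext i; ring
      rwa [e1, e2] at hm
    have step2 : f (fun i => z s i - κ) ≤ f (fun i => qb i - κ) + L * δ := by
      have habs := hLf (fun i => z s i - κ) (fun i => qb i - κ)
      have e3 : (fun i => z s i - κ) - (fun i => qb i - κ) = z s - qb := by
        funext i; simp [Pi.sub_apply]
      rw [e3] at habs
      have := abs_le.1 habs
      have hL5 : L * ‖z s - qb‖ ≤ L * δ := mul_le_mul_of_nonneg_left hzbs hL.le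
      linarith
    have step3 : (f fun i => qb i - κ) ≤ f fun i => q₁ i - κ := hq₁max hqbE
    have : f (x s) - rstar < 0 := by linarith [hm₁def, hδm₁]
    exact mul_neg_of_pos_of_neg hα this
  have hbar_dn : ∀ s, 0 ≤ s → κ ≤ -(c s) → -(h s) < 0 := by
    intro s hs hcs
    have hzbs := hzb s hs
    have step1 : f (fun i => z s i + κ) ≤ f (x s) := by
      have hm := (hS (z s)).1.monotone (show κ ≤ -(c s) from hcs)
      have e1 : (fun i => z s i + -(c s)) = x s := by
        funext i; rw [hzeq s]; ring
      rwa [e1] at hm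
    have step2 : f (fun i => qb i + κ) - L * δ ≤ f (fun i => z s i + κ) := by
      have habs := hLf (fun i => z s i + κ) (fun i => qb i + κ)
      have e3 : (fun i => z s i + κ) - (fun i => qb i + κ) = z s - qb := by
        funext i; simp [Pi.sub_apply]
      rw [e3] at habs
      have := abs_le.1 habs
      have hL5 : L * ‖z s - qb‖ ≤ L * δ := mul_le_mul_of_nonneg_left hzbs hL.le
      linarith
    have step3 : (f fun i => q₂ i + κ) ≤ f fun i => qb i + κ := hq₂min hqbE
    have h6 : 0 < f (x s) - rstar := by linarith [hm₂def, hδm₂]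
    have h7 := mul_pos hα h6
    have h8 : h s = α * (f (x s) - rstar) := rfl
    show -(h s) < 0
    linarith
  have hcu : ∀ s, 0 ≤ s → c s ≤ κ :=
    barrier_le c h hc (by rw [hc0]; exact hκ.le) hbar_up
  have hcl : ∀ s, 0 ≤ s → -(c s) ≤ κ :=
    barrier_le (fun s => -(c s)) (fun s => -(h s)) (fun s => (hc s).neg)
      (by show -(c 0) ≤ κ; rw [hc0]; simpa using hκ.le) hbar_dn
  -- conclusion
  have hxt : ‖x t - qb‖ ≤ δ + κ := by
    have e : x t - qb = (z t - qb) - (fun _ : Fin d => c t) := by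
      funext i; rw [hzeq t]; simp [Pi.sub_apply]; ring
    rw [e]
    have h1 : ‖(z t - qb) - (fun _ : Fin d => c t)‖ ≤ ‖z t - qb‖ + ‖(fun _ : Fin d => c t)‖ :=
      norm_sub_le _ _
    have h2 : ‖(fun _ : Fin d => c t)‖ = |c t| := by
      rw [pi_norm_const (c t)]; exact Real.norm_eq_abs _
    have h3 : |c t| ≤ κ := abs_le.2 ⟨by linarith [hcl t ht], hcu t ht⟩
    have h4 := hzb t ht
    rw [h2] at h1
    linarith
  calc Metric.infDist (x t) E ≤ dist (x t) qb := Metric.infDist_le_dist_of_mem hqbE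
    _ = ‖x t - qb‖ := dist_eq_norm _ _
    _ ≤ δ + κ := hxt
    _ ≤ κ + κ := by linarith
    _ = ε := by rw [hκdef]; ring
end

section
/- Let g₁, …, g_m : ℝ^d → ℝ each be Lipschitz continuous and SISTr, with pointwise scaling limits g_{1,∞}, …, g_{m,∞} that are each SISTr at the origin. Let ψ : ℝ^m → ℝ be Lipschitz continuous and strictly monotone (ψ(y) > ψ(y') whenever y_i > y'_i for all i), with ψ(y) → ∞ as min_i y_i → ∞ and ψ(y) → −∞ as max_i y_i → −∞; and suppose ψ(c·y)/c converges pointwise as c → ∞ to a function ψ∞ : ℝ^m → ℝ that is also Lipschitz, strictly monotone, and satisfies ψ∞(y) → ∞ as min_i y_i → ∞ and ψ∞(y) → −∞ as max_i y_i → −∞. Then f(x) := ψ(g₁(x), …, g_m(x)) is Lipschitz continuous and SISTr, f(c·x)/c converges pointwise as c → ∞ to f∞(x) := ψ∞(g_{1,∞}(x), …, g_{m,∞}(x)), and f∞ is SISTr at the origin. -/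
/-!
For fixed `x`, each `c ↦ gₖ(x + c)` is an order automorphism of `ℝ`, so `c ↦ f(x + c)` is strictly
increasing (strict monotonicity of `ψ`), continuous, and tends to `±∞` at `±∞` (coercivity of `ψ`);
hence it is onto `ℝ`. The same argument applies to `f∞` at the origin. For the scaling limit,
`|ψ(g(c x))/c - ψ(c g∞(x))/c| ≤ L ‖g(c x)/c - g∞(x)‖ → 0` since `ψ` is `L`-Lipschitz, and
`ψ(c g∞(x))/c → ψ∞(g∞(x))` by assumption.
-/

open Filter Topology

section Lipschitz

variable {E : Type*} [SeminormedAddCommGroup E] {f : E → ℝ}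

lemma lipschitzWith_of_abs_sub_le {L : ℝ} (h : ∀ x y, |f x - f y| ≤ L * ‖x - y‖) :
    LipschitzWith L.toNNReal f :=
  .of_dist_le' fun x y => by rw [Real.dist_eq, dist_eq_norm]; exact h x y

lemma LipschitzWith.abs_sub_le {K : NNReal} (hf : LipschitzWith K f) (x y : E) :
    |f x - f y| ≤ K * ‖x - y‖ := by
  rw [← Real.dist_eq, ← dist_eq_norm]; exact hf.dist_le_mul x y

end Lipschitz

lemma LipschitzWith.pi {α ι : Type*} [PseudoEMetricSpace α] [Fintype ι] {β : ι → Type*}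
    [∀ i, PseudoEMetricSpace (β i)] {K : NNReal} {f : α → ∀ i, β i}
    (hf : ∀ i, LipschitzWith K fun x => f x i) : LipschitzWith K f :=
  fun x y => edist_pi_le_iff.2 fun i => hf i x y

lemma LipschitzWith.tendsto_div_of_tendsto_inv_smul {E : Type*} [NormedAddCommGroup E]
    [NormedSpace ℝ E] {ψ : E → ℝ} {K : NNReal} (hψ : LipschitzWith K ψ) {v : ℝ → E} {y : E}
    {ℓ : ℝ} (hv : Tendsto (fun c => c⁻¹ • v c) atTop (𝓝 y))
    (hψy : Tendsto (fun c => ψ (c • y) / c) atTop (𝓝 ℓ)) :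
    Tendsto (fun c => ψ (v c) / c) atTop (𝓝 ℓ) := by
  have hbound : ∀ᶠ c in atTop,
      dist (ψ (c • y) / c) (ψ (v c) / c) ≤ K * ‖c⁻¹ • v c - y‖ := by
    filter_upwards [eventually_gt_atTop 0] with c hc
    have hvc : v c - c • y = c • (c⁻¹ • v c - y) := by
      rw [smul_sub, smul_inv_smul₀ hc.ne']
    calc dist (ψ (c • y) / c) (ψ (v c) / c)
        = |ψ (v c) - ψ (c • y)| / c := by
          rw [Real.dist_eq, abs_sub_comm, ← sub_div, abs_div, abs_of_pos hc]
      _ ≤ K * ‖v c - c • y‖ / c := by gcongr; exact hψ.abs_sub_le _ _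
      _ = K * ‖c⁻¹ • v c - y‖ := by
          rw [hvc, norm_smul, Real.norm_of_nonneg hc.le]; field_simp
  have hnorm : Tendsto (fun c => (K : ℝ) * ‖c⁻¹ • v c - y‖) atTop (𝓝 0) := by
    simpa using (tendsto_iff_norm_sub_tendsto_zero.1 hv).const_mul (K : ℝ)
  exact hψy.congr_dist (squeeze_zero' (.of_forall fun _ => dist_nonneg) hbound hnorm)

section Coercive

variable {ι : Type*} {ψ : (ι → ℝ) → ℝ}

lemma tendsto_pi_atTop_of_forall_le [Finite ι] (h : ∀ M, ∃ N, ∀ y, (∀ i, N ≤ y i) → M ≤ ψ y) :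
    Tendsto ψ (Filter.pi fun _ => atTop) atTop :=
  tendsto_atTop.2 fun M =>
    let ⟨N, hN⟩ := h M
    (eventually_pi fun _ => eventually_ge_atTop N).mono hN

lemma tendsto_pi_atBot_of_forall_le [Finite ι] (h : ∀ M, ∃ N, ∀ y, (∀ i, y i ≤ N) → ψ y ≤ M) :
    Tendsto ψ (Filter.pi fun _ => atBot) atBot :=
  tendsto_atBot.2 fun M =>
    let ⟨N, hN⟩ := h M
    (eventually_pi fun _ => eventually_le_atBot N).mono hN

lemma strictMono_surjective_comp_orderIso (hψc : Continuous ψ)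
    (hψmono : ∀ y y', (∀ i, y' i < y i) → ψ y' < ψ y)
    (hψtop : Tendsto ψ (Filter.pi fun _ => atTop) atTop)
    (hψbot : Tendsto ψ (Filter.pi fun _ => atBot) atBot) (φ : ι → ℝ ≃o ℝ) :
    StrictMono (fun c => ψ fun i => φ i c) ∧ Function.Surjective (fun c => ψ fun i => φ i c) :=
  ⟨fun _ _ hcc' => hψmono _ _ fun i => (φ i).strictMono hcc',
    (hψc.comp (continuous_pi fun i => (φ i).continuous)).surjective
      (hψtop.comp (tendsto_pi.2 fun i => (φ i).tendsto_atTop))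
      (hψbot.comp (tendsto_pi.2 fun i => (φ i).tendsto_atBot))⟩

end Coercive

lemma SISTrAt.comp {d m : ℕ} {g : Fin m → (Fin d → ℝ) → ℝ} {x : Fin d → ℝ}
    (hg : ∀ k, SISTrAt (g k) x) {ψ : (Fin m → ℝ) → ℝ} (hψc : Continuous ψ)
    (hψmono : ∀ y y', (∀ i, y' i < y i) → ψ y' < ψ y)
    (hψtop : Tendsto ψ (Filter.pi fun _ => atTop) atTop)
    (hψbot : Tendsto ψ (Filter.pi fun _ => atBot) atBot) :
    SISTrAt (fun x => ψ fun k => g k x) x :=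
  strictMono_surjective_comp_orderIso hψc hψmono hψtop hψbot fun k =>
    (hg k).1.orderIsoOfSurjective _ (hg k).2

theorem statement14_general {d m : ℕ}
    (g ginf : Fin m → (Fin d → ℝ) → ℝ)
    (hgLip : ∀ k, ∃ L : ℝ, ∀ x y : Fin d → ℝ, |g k x - g k y| ≤ L * ‖x - y‖)
    (hgS : ∀ k, SISTr (g k))
    (hglim : ∀ k (x : Fin d → ℝ),
      Filter.Tendsto (fun c : ℝ => g k (c • x) / c) Filter.atTop (nhds (ginf k x)))
    (hginf0 : ∀ k, SISTrAt (ginf k) 0)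
    (ψ ψinf : (Fin m → ℝ) → ℝ)
    (hψLip : ∃ L : ℝ, ∀ y y' : Fin m → ℝ, |ψ y - ψ y'| ≤ L * ‖y - y'‖)
    (hψmono : ∀ y y' : Fin m → ℝ, (∀ i, y' i < y i) → ψ y' < ψ y)
    (hψtop : ∀ M : ℝ, ∃ N : ℝ, ∀ y : Fin m → ℝ, (∀ i, N ≤ y i) → M ≤ ψ y)
    (hψbot : ∀ M : ℝ, ∃ N : ℝ, ∀ y : Fin m → ℝ, (∀ i, y i ≤ N) → ψ y ≤ M)
    (hψlim : ∀ y : Fin m → ℝ,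
      Filter.Tendsto (fun c : ℝ => ψ (c • y) / c) Filter.atTop (nhds (ψinf y)))
    (hψinfLip : ∃ L : ℝ, ∀ y y' : Fin m → ℝ, |ψinf y - ψinf y'| ≤ L * ‖y - y'‖)
    (hψinfmono : ∀ y y' : Fin m → ℝ, (∀ i, y' i < y i) → ψinf y' < ψinf y)
    (hψinftop : ∀ M : ℝ, ∃ N : ℝ, ∀ y : Fin m → ℝ, (∀ i, N ≤ y i) → M ≤ ψinf y)
    (hψinfbot : ∀ M : ℝ, ∃ N : ℝ, ∀ y : Fin m → ℝ, (∀ i, y i ≤ N) → ψinf y ≤ M) :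
    (∃ L : ℝ, ∀ x y : Fin d → ℝ,
      |ψ (fun k => g k x) - ψ (fun k => g k y)| ≤ L * ‖x - y‖) ∧
    SISTr (fun x : Fin d → ℝ => ψ (fun k => g k x)) ∧
    (∀ x : Fin d → ℝ,
      Filter.Tendsto (fun c : ℝ => ψ (fun k => g k (c • x)) / c) Filter.atTop
        (nhds (ψinf (fun k => ginf k x)))) ∧
    SISTrAt (fun x : Fin d → ℝ => ψinf (fun k => ginf k x)) 0 := by
  obtain ⟨Lψ, hLψ⟩ := hψLip
  obtain ⟨Lψinf, hLψinf⟩ := hψinfLip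
  choose Lg hLg using hgLip
  have hψ := lipschitzWith_of_abs_sub_le hLψ
  have hψinf := lipschitzWith_of_abs_sub_le hLψinf
  have hG : LipschitzWith (Finset.univ.sup fun k => (Lg k).toNNReal) fun x k => g k x :=
    .pi fun k => (lipschitzWith_of_abs_sub_le (hLg k)).weaken <|
      Finset.le_sup (f := fun k => (Lg k).toNNReal) (Finset.mem_univ k)
  have hgscale : ∀ x, Tendsto (fun c : ℝ => c⁻¹ • fun k => g k (c • x)) atTop
      (𝓝 fun k => ginf k x) := fun x =>
    tendsto_pi_nhds.2 fun k => by
      simpa only [Pi.smul_apply, smul_eq_mul, div_eq_inv_mul] using hglim k x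
  refine ⟨⟨_, (hψ.comp hG).abs_sub_le⟩,
    fun x => SISTrAt.comp (fun k => hgS k x) hψ.continuous hψmono
      (tendsto_pi_atTop_of_forall_le hψtop) (tendsto_pi_atBot_of_forall_le hψbot),
    fun x => hψ.tendsto_div_of_tendsto_inv_smul (hgscale x) (hψlim _),
    SISTrAt.comp hginf0 hψinf.continuous hψinfmono
      (tendsto_pi_atTop_of_forall_le hψinftop) (tendsto_pi_atBot_of_forall_le hψinfbot)⟩

/-- Composing SISTr functions `g₁, …, g_m` with a Lipschitz, strictly
monotone, coercive `ψ` yields a Lipschitz SISTr function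
`f = ψ(g₁, …, g_m)` whose scaling limit is `f∞ = ψ∞(g_{1,∞}, …, g_{m,∞})`,
which is SISTr at the origin. -/
theorem statement14 {d m : ℕ} (hd : 1 ≤ d) (hm : 1 ≤ m)
    (g ginf : Fin m → (Fin d → ℝ) → ℝ)
    (hgLip : ∀ k, ∃ L : ℝ, ∀ x y : Fin d → ℝ, |g k x - g k y| ≤ L * ‖x - y‖)
    (hgS : ∀ k, SISTr (g k))
    (hglim : ∀ k (x : Fin d → ℝ),
      Filter.Tendsto (fun c : ℝ => g k (c • x) / c) Filter.atTop (nhds (ginf k x)))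
    (hginf0 : ∀ k, SISTrAt (ginf k) 0)
    (ψ ψinf : (Fin m → ℝ) → ℝ)
    (hψLip : ∃ L : ℝ, ∀ y y' : Fin m → ℝ, |ψ y - ψ y'| ≤ L * ‖y - y'‖)
    (hψmono : ∀ y y' : Fin m → ℝ, (∀ i, y' i < y i) → ψ y' < ψ y)
    (hψtop : ∀ M : ℝ, ∃ N : ℝ, ∀ y : Fin m → ℝ, (∀ i, N ≤ y i) → M ≤ ψ y)
    (hψbot : ∀ M : ℝ, ∃ N : ℝ, ∀ y : Fin m → ℝ, (∀ i, y i ≤ N) → ψ y ≤ M)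
    (hψlim : ∀ y : Fin m → ℝ,
      Filter.Tendsto (fun c : ℝ => ψ (c • y) / c) Filter.atTop (nhds (ψinf y)))
    (hψinfLip : ∃ L : ℝ, ∀ y y' : Fin m → ℝ, |ψinf y - ψinf y'| ≤ L * ‖y - y'‖)
    (hψinfmono : ∀ y y' : Fin m → ℝ, (∀ i, y' i < y i) → ψinf y' < ψinf y)
    (hψinftop : ∀ M : ℝ, ∃ N : ℝ, ∀ y : Fin m → ℝ, (∀ i, N ≤ y i) → M ≤ ψinf y)
    (hψinfbot : ∀ M : ℝ, ∃ N : ℝ, ∀ y : Fin m → ℝ, (∀ i, y i ≤ N) → ψinf y ≤ M) :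
    (∃ L : ℝ, ∀ x y : Fin d → ℝ,
      |ψ (fun k => g k x) - ψ (fun k => g k y)| ≤ L * ‖x - y‖) ∧
    SISTr (fun x : Fin d → ℝ => ψ (fun k => g k x)) ∧
    (∀ x : Fin d → ℝ,
      Filter.Tendsto (fun c : ℝ => ψ (fun k => g k (c • x)) / c) Filter.atTop
        (nhds (ψinf (fun k => ginf k x)))) ∧
    SISTrAt (fun x : Fin d → ℝ => ψinf (fun k => ginf k x)) 0 :=
  statement14_general g ginf hgLip hgS hglim hginf0 ψ ψinf hψLip hψmono hψtop hψbot hψlim hψinfLip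
    hψinfmono hψinftop hψinfbot
end

section
/- Let {α_n}_{n≥0} and {β_n}_{n≥0} be sequences of positive reals such that Σ_n α_n = ∞ and α_n → 0 as n → ∞, and suppose there exist constants ς > 0, c > 0, and N such that ς·α_n ≤ β_n ≤ c·α_n for all n ≥ N. Then ℓ({β_n}) ≤ ℓ({α_n})/c, i.e., limsup_{n→∞} ln(β_n)/(Σ_{k=0}^{n} β_k) ≤ (1/c)·limsup_{n→∞} ln(α_n)/(Σ_{k=0}^{n} α_k). -/
/-!
Write `S_n`, `T_n` for the partial sums of `α`, `β` and `L = ℓ({α_n})`, and let `r` be real with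
`L / c < r`; pick `M` with `L < M < c r`. Eventually `ln α_n < M S_n`, `β_n ≤ 1` and
`T_n ≤ C + c S_n`, where `C` is the sum of the first `N` terms of `β`. As `ln β_n ≤ 0`, enlarging
the denominator gives `ln β_n / T_n ≤ (ln c + M S_n) / (C + c S_n)`, and the right side tends to
`M / c < r` because `S_n → ∞`. Hence `ℓ({β_n}) ≤ r`.
-/

open Filter Finset Topology

noncomputable section

def logRatio (α : ℕ → ℝ) (n : ℕ) : ℝ := Real.log (α n) / ∑ k ∈ range (n + 1), α k

/-- The paper's `ℓ({α_n})`. -/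
def ell (α : ℕ → ℝ) : EReal := limsup (fun n => (logRatio α n : EReal)) atTop

end

lemma EReal.coe_inv_mul_lt_iff {c r : ℝ} {x : EReal} (hc : 0 < c) :
    ((c⁻¹ : ℝ) : EReal) * x < r ↔ x < ((c * r : ℝ) : EReal) := by
  rw [EReal.coe_inv, mul_comm, ← div_eq_mul_inv,
    EReal.div_lt_iff (EReal.coe_pos.2 hc) (EReal.coe_ne_top c), ← EReal.coe_mul, mul_comm]

lemma tendsto_add_mul_div_add_mul_atTop (a b d c : ℝ) (hc : c ≠ 0) :
    Tendsto (fun x => (a + b * x) / (d + c * x)) atTop (𝓝 (b / c)) := by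
  have h : Tendsto (fun x : ℝ => (a * x⁻¹ + b) / (d * x⁻¹ + c)) atTop
      (𝓝 ((a * 0 + b) / (d * 0 + c))) :=
    ((tendsto_inv_atTop_zero.const_mul a).add_const b).div
      ((tendsto_inv_atTop_zero.const_mul d).add_const c) (by simpa using hc)
  simp only [mul_zero, zero_add] at h
  refine h.congr' ?_
  filter_upwards [eventually_gt_atTop 0] with x hx
  field_simp

lemma sum_range_le_add_mul_sum_range {f g : ℕ → ℝ} {c : ℝ} {N n : ℕ} (hg : ∀ k, 0 ≤ g k)
    (hc : 0 ≤ c) (hfg : ∀ k, N ≤ k → f k ≤ c * g k) (hN : N ≤ n) :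
    ∑ k ∈ range n, f k ≤ ∑ k ∈ range N, f k + c * ∑ k ∈ range n, g k := by
  rw [← sum_range_add_sum_Ico f hN]
  gcongr
  calc ∑ k ∈ Ico N n, f k ≤ ∑ k ∈ Ico N n, c * g k :=
        sum_le_sum fun k hk => hfg k (mem_Ico.1 hk).1
    _ = c * ∑ k ∈ Ico N n, g k := (mul_sum _ _ _).symm
    _ ≤ c * ∑ k ∈ range n, g k := by
        gcongr
        · exact fun k _ _ => hg k
        · exact fun k hk => mem_range.2 (mem_Ico.1 hk).2

lemma logRatio_le_of_le_mul {α β : ℕ → ℝ} {c C M : ℝ} {n : ℕ} (hα : ∀ k, 0 < α k)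
    (hβ : ∀ k, 0 < β k) (hc : 0 < c) (hC : 0 ≤ C) (hβ1 : β n ≤ 1) (hβα : β n ≤ c * α n)
    (hsum : ∑ k ∈ range (n + 1), β k ≤ C + c * ∑ k ∈ range (n + 1), α k)
    (hαM : logRatio α n ≤ M) :
    logRatio β n ≤
      (Real.log c + M * ∑ k ∈ range (n + 1), α k) / (C + c * ∑ k ∈ range (n + 1), α k) := by
  set S := ∑ k ∈ range (n + 1), α k
  have hS : 0 < S := sum_pos (fun k _ => hα k) nonempty_range_add_one
  have hT : 0 < ∑ k ∈ range (n + 1), β k := sum_pos (fun k _ => hβ k) nonempty_range_add_one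
  have hlogβ : Real.log (β n) ≤ Real.log c + M * S := calc
    Real.log (β n) ≤ Real.log (c * α n) := Real.log_le_log (hβ n) hβα
    _ = Real.log c + Real.log (α n) := Real.log_mul hc.ne' (hα n).ne'
    _ ≤ Real.log c + M * S := by gcongr; exact (div_le_iff₀ hS).1 hαM
  have hlogβ0 : 0 ≤ -Real.log (β n) := neg_nonneg.2 (Real.log_nonpos (hβ n).le hβ1)
  calc logRatio β n ≤ Real.log (β n) / (C + c * S) := by
        simpa only [logRatio, neg_div, neg_le_neg_iff] using div_le_div_of_nonneg_left hlogβ0 hT hsum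
    _ ≤ (Real.log c + M * S) / (C + c * S) := by gcongr

lemma eventually_logRatio_le {α β : ℕ → ℝ} {c r : ℝ} {N : ℕ} (hα : ∀ n, 0 < α n)
    (hβ : ∀ n, 0 < β n) (hdiv : Tendsto (fun n => ∑ k ∈ range (n + 1), α k) atTop atTop)
    (hc : 0 < c) (hβα : ∀ n, N ≤ n → β n ≤ c * α n) (hβ1 : ∀ᶠ n in atTop, β n ≤ 1)
    (hr : ell α < ((c * r : ℝ) : EReal)) : ∀ᶠ n in atTop, logRatio β n ≤ r := by
  obtain ⟨M, hLM, hMr⟩ := EReal.exists_between_coe_real hr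
  have hMc : M / c < r := (div_lt_iff₀' hc).2 (EReal.coe_lt_coe_iff.1 hMr)
  set C := ∑ k ∈ range N, β k
  have hC : 0 ≤ C := sum_nonneg fun k _ => (hβ k).le
  have hlim := (tendsto_add_mul_div_add_mul_atTop (Real.log c) M C c hc.ne').comp hdiv
  filter_upwards [eventually_lt_of_limsup_lt hLM, hlim.eventually (eventually_lt_nhds hMc), hβ1,
    eventually_ge_atTop N] with n hαM hbound hβn hn
  have hsum := sum_range_le_add_mul_sum_range (fun k => (hα k).le) hc.le hβα (hn.trans n.le_succ)
  exact (logRatio_le_of_le_mul hα hβ hc hC hβn (hβα n hn) hsum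
    (EReal.coe_le_coe_iff.1 hαM.le)).trans hbound.le

theorem statement17_general (α β : ℕ → ℝ)
    (hα : ∀ n, 0 < α n) (hβ : ∀ n, 0 < β n)
    (hdiv : Filter.Tendsto (fun n : ℕ => ∑ k ∈ Finset.range n, α k)
      Filter.atTop Filter.atTop)
    (hα0 : Filter.Tendsto α Filter.atTop (nhds 0))
    (ς c : ℝ) (hc : 0 < c) (N : ℕ)
    (hscale : ∀ n : ℕ, N ≤ n → ς * α n ≤ β n ∧ β n ≤ c * α n) :
    Filter.limsup
        (fun n : ℕ =>
          ((Real.log (β n) / ∑ k ∈ Finset.range (n + 1), β k : ℝ) : EReal))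
        Filter.atTop
      ≤ ((1 / c : ℝ) : EReal) *
        Filter.limsup
          (fun n : ℕ =>
            ((Real.log (α n) / ∑ k ∈ Finset.range (n + 1), α k : ℝ) : EReal))
          Filter.atTop := by
  change ell β ≤ ((1 / c : ℝ) : EReal) * ell α
  have hβα : ∀ n, N ≤ n → β n ≤ c * α n := fun n hn => (hscale n hn).2
  have hβ1 : ∀ᶠ n in atTop, β n ≤ 1 := by
    have hcα : Tendsto (fun n => c * α n) atTop (𝓝 0) := by simpa using hα0.const_mul c
    filter_upwards [hcα.eventually_lt_const one_pos, eventually_ge_atTop N] with n h hn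
    exact (hβα n hn).trans h.le
  refine EReal.le_of_forall_lt_iff_le.1 fun r hr => limsup_le_of_le (by isBoundedDefault) ?_
  rw [one_div, EReal.coe_inv_mul_lt_iff hc] at hr
  filter_upwards [eventually_logRatio_le hα hβ (hdiv.comp (tendsto_add_atTop_nat 1)) hc hβα hβ1 hr]
    with n hn
  exact EReal.coe_le_coe_iff.2 hn

/-- If `Σ_n α_n = ∞`, `α_n → 0`, and eventually `ς α_n ≤ β_n ≤ c α_n`, then
`ℓ({β_n}) ≤ ℓ({α_n})/c`, where
`ℓ({α_n}) = limsup_n ln(α_n)/(Σ_{k=0}^n α_k)` (computed in the extended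
reals, since it may be `−∞`). -/
theorem statement17 (α β : ℕ → ℝ)
    (hα : ∀ n, 0 < α n) (hβ : ∀ n, 0 < β n)
    (hdiv : Filter.Tendsto (fun n : ℕ => ∑ k ∈ Finset.range n, α k)
      Filter.atTop Filter.atTop)
    (hα0 : Filter.Tendsto α Filter.atTop (nhds 0))
    (ς c : ℝ) (hς : 0 < ς) (hc : 0 < c) (N : ℕ)
    (hscale : ∀ n : ℕ, N ≤ n → ς * α n ≤ β n ∧ β n ≤ c * α n) :
    Filter.limsup
        (fun n : ℕ =>
          ((Real.log (β n) / ∑ k ∈ Finset.range (n + 1), β k : ℝ) : EReal))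
        Filter.atTop
      ≤ ((1 / c : ℝ) : EReal) *
        Filter.limsup
          (fun n : ℕ =>
            ((Real.log (α n) / ∑ k ∈ Finset.range (n + 1), α k : ℝ) : EReal))
          Filter.atTop :=
  statement17_general α β hα hβ hdiv hα0 ς c hc N hscale
end

section
/- Let T : ℝ^d → ℝ^d be nonexpansive with respect to the sup norm (‖T(q) − T(q')‖∞ ≤ ‖q − q'‖∞ for all q, q'), let ᾱ > 0 and r* ∈ ℝ, and let ȳ ∈ ℝ^d satisfy T(ȳ) = ȳ + ᾱ·r*. If y : ℝ → ℝ^d is differentiable and satisfies ẏ(t) = T(y(t)) − y(t) − ᾱ·r* for all t, then the map t ↦ ‖y(t) − ȳ‖∞ is nonincreasing on ℝ. -/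
/-- If `T` is sup-norm nonexpansive, `T(ȳ) = ȳ + ᾱ r*`, and
`ẏ(t) = T(y(t)) − y(t) − ᾱ r*` for all `t`, then `t ↦ ‖y(t) − ȳ‖∞` is
nonincreasing on `ℝ`. -/
theorem statement18 {d : ℕ} (hd : 1 ≤ d)
    (T : (Fin d → ℝ) → (Fin d → ℝ))
    (hT : ∀ q q' : Fin d → ℝ, ‖T q - T q'‖ ≤ ‖q - q'‖)
    (α rstar : ℝ) (hα : 0 < α)
    (ybar : Fin d → ℝ) (hybar : T ybar = fun i => ybar i + α * rstar)
    (y : ℝ → (Fin d → ℝ))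
    (hy : ∀ t : ℝ, HasDerivAt y (fun i => T (y t) i - y t i - α * rstar) t) :
    Antitone (fun t : ℝ => ‖y t - ybar‖) := by
  intro s t hst
  set w : ℝ → (Fin d → ℝ) := fun u => Real.exp u • (y u - ybar) with hw
  have hwderiv : ∀ u : ℝ, HasDerivAt w (Real.exp u • (T (y u) - T ybar)) u := by
    intro u
    have h1 : HasDerivAt (fun u => y u - ybar)
        (fun i => T (y u) i - y u i - α * rstar) u := (hy u).sub_const ybar
    have h2 := (Real.hasDerivAt_exp u).smul h1
    convert h2 using 1
    iterate 4 rfl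
    funext i
    simp only [hybar, Pi.smul_apply, Pi.add_apply, Pi.sub_apply, smul_eq_mul]
    ring
  have hnorm : ∀ u : ℝ, ‖w u‖ = Real.exp u * ‖y u - ybar‖ := by
    intro u
    rw [hw]
    simp [norm_smul, Real.abs_exp]
  have hbound : ∀ u ∈ Set.Ico s t, ‖Real.exp u • (T (y u) - T ybar)‖ ≤ 1 * ‖w u‖ + 0 := by
    intro u _
    rw [one_mul, add_zero, hnorm, norm_smul, Real.norm_eq_abs, Real.abs_exp]
    exact mul_le_mul_of_nonneg_left (hT _ _) (Real.exp_pos u).le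
  have key := norm_le_gronwallBound_of_norm_deriv_right_le
    (f := w) (f' := fun u => Real.exp u • (T (y u) - T ybar))
    (a := s) (b := t) (δ := ‖w s‖) (K := 1) (ε := 0)
    (fun u _ => (hwderiv u).continuousAt.continuousWithinAt)
    (fun u _ => (hwderiv u).hasDerivWithinAt) le_rfl hbound t ⟨hst, le_rfl⟩
  rw [gronwallBound_ε0, hnorm, hnorm, one_mul] at key
  have hexp : Real.exp s * ‖y s - ybar‖ * Real.exp (t - s)
      = Real.exp t * ‖y s - ybar‖ := by
    rw [mul_right_comm, ← Real.exp_add, add_sub_cancel]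
  rw [hexp] at key
  exact le_of_mul_le_mul_left key (Real.exp_pos t)
end
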